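/- arXiv:math/0310156 — 6 statements merged into one kernel-verified Lean document; each statement's English description precedes it below -/
import Mathlib

section
/- Let n ≥ 1, let Cⁿ be the quotient of ℝⁿ by the identification x ∼ −x (the open cone over ℝP^{n−1}), with vertex [0] and norm ‖[x]‖ = ‖x‖. Let 𝓛 be a set of lines in ℝⁿ and c : 𝓛 → Cⁿ a map such that for every l ∈ 𝓛, c(l) = [x_l] where x_l ≠ 0 is a direction vector of l and ‖x_l‖ ≥ 1, and such that parallel lines receive the same value of c. Let A be the quotient space of Cⁿ × ℝⁿ obtained by collapsing each 'lifted line' {c(l)} × l (l ∈ 𝓛) to a point. Then A is contractible. -/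
noncomputable section

/-- Euclidean `n`-space. -/
abbrev E (n : ℕ) := EuclideanSpace ℝ (Fin n)

/-- The equivalence relation identifying `x` with `-x` in `ℝⁿ`. -/
def coneSetoid (n : ℕ) : Setoid (E n) where
  r x y := x = y ∨ x = -y
  iseqv := by
    constructor
    · intro x; exact Or.inl rfl
    · rintro x y (h | h) <;> simp [h]
    · rintro x y z (h | h) (h2 | h2) <;> simp [h, h2]

/-- The open cone `Cⁿ = ℝⁿ/(x ∼ -x)`, homeomorphic to the open cone over `ℝPⁿ⁻¹`. -/
def ConeSp (n : ℕ) := Quotient (coneSetoid n)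

instance (n : ℕ) : TopologicalSpace (ConeSp n) :=
  inferInstanceAs (TopologicalSpace (Quotient (coneSetoid n)))

namespace CollapsedAux

/-- clamp to `[0,1]`. -/
def cl (s : ℝ) : ℝ := min (max s 0) 1

lemma continuous_cl : Continuous cl :=
  (continuous_id.max continuous_const).min continuous_const

lemma cl_of_one_le {s : ℝ} (h : 1 ≤ s) : cl s = 1 := by
  unfold cl
  rw [max_eq_left (le_trans zero_le_one h), min_eq_right h]

lemma cl_of_nonpos {s : ℝ} (h : s ≤ 0) : cl s = 0 := by
  unfold cl
  rw [max_eq_right h, min_eq_left zero_le_one]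

variable {n : ℕ}

/-- The "projection along the fiber direction" vector field. -/
def ut (v x : E n) : E n := (min ‖v‖ 1 * ((inner ℝ x v : ℝ) / ‖v‖ ^ 2)) • v

lemma ut_neg (v x : E n) : ut (-v) x = ut v x := by
  simp [ut, inner_neg_right, neg_div, mul_neg, smul_neg]

lemma ut_le (p : E n × E n) : ‖ut p.1 p.2‖ ≤ min ‖p.1‖ 1 * ‖p.2‖ := by
  obtain ⟨v, x⟩ := p
  rcases eq_or_ne v 0 with rfl | h
  · simp [ut]
  · have hp : (0:ℝ) < ‖v‖ := norm_pos_iff.2 h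
    have key : |(inner ℝ x v : ℝ)| / ‖v‖ ^ 2 * ‖v‖ ≤ ‖x‖ := by
      rw [div_mul_eq_mul_div, div_le_iff₀ (by positivity)]
      calc |(inner ℝ x v : ℝ)| * ‖v‖ ≤ (‖x‖ * ‖v‖) * ‖v‖ := by
            gcongr; exact abs_real_inner_le_norm _ _
        _ = ‖x‖ * ‖v‖ ^ 2 := by ring
    have hmin : (0:ℝ) ≤ min ‖v‖ 1 := le_min (norm_nonneg _) zero_le_one
    show ‖(min ‖v‖ 1 * ((inner ℝ x v : ℝ) / ‖v‖ ^ 2)) • v‖ ≤ min ‖v‖ 1 * ‖x‖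
    rw [norm_smul, Real.norm_eq_abs, abs_mul, abs_of_nonneg hmin, abs_div,
      abs_of_nonneg (by positivity : (0:ℝ) ≤ ‖v‖ ^ 2), mul_assoc]
    exact mul_le_mul_of_nonneg_left key hmin

lemma continuous_ut : Continuous fun p : E n × E n => ut p.1 p.2 := by
  rw [continuous_iff_continuousAt]
  rintro ⟨v, x⟩
  rcases eq_or_ne v 0 with rfl | hv
  · have h0 : (fun p : E n × E n => ut p.1 p.2) ((0 : E n), x) = 0 := by simp [ut]
    unfold ContinuousAt
    rw [h0]
    apply squeeze_zero_norm ut_le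
    have hg : Continuous fun p : E n × E n => min ‖p.1‖ 1 * ‖p.2‖ :=
      (continuous_fst.norm.min continuous_const).mul continuous_snd.norm
    have := hg.tendsto ((0 : E n), x)
    simpa using this
  · have hn2 : (‖v‖ ^ 2 : ℝ) ≠ 0 := pow_ne_zero _ (norm_ne_zero_iff.2 hv)
    show ContinuousAt (fun p : E n × E n =>
      (min ‖p.1‖ 1 * ((inner ℝ p.2 p.1 : ℝ) / ‖p.1‖ ^ 2)) • p.1) (v, x)
    have h1 : ContinuousAt (fun p : E n × E n => (inner ℝ p.2 p.1 : ℝ) / ‖p.1‖ ^ 2) (v, x) :=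
      (show Continuous fun p : E n × E n => (inner ℝ p.2 p.1 : ℝ) from
            continuous_snd.inner continuous_fst).continuousAt.div
          ((show Continuous fun p : E n × E n => ‖p.1‖ ^ 2 from
            continuous_fst.norm.pow 2).continuousAt) hn2
    have h2 : ContinuousAt (fun p : E n × E n => min ‖p.1‖ 1) (v, x) :=
      ((continuous_fst.norm.min continuous_const).continuousAt)
    exact (h2.mul h1).smul continuous_fst.continuousAt

lemma line_sub {v : E n} (hv : 1 ≤ ‖v‖) (p : E n) (t a : ℝ) :
    (p + t • v) - a • ut v (p + t • v)
      = p + ((1 - a) * t - a * ((inner ℝ p v : ℝ) / ‖v‖ ^ 2)) • v := by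
  have h2 : (‖v‖ : ℝ) ^ 2 ≠ 0 :=
    pow_ne_zero _ (ne_of_gt (lt_of_lt_of_le one_pos hv))
  unfold ut
  rw [min_eq_right hv, one_mul, inner_add_left, real_inner_smul_left,
    real_inner_self_eq_norm_sq]
  match_scalars
  · ring
  · field_simp
    ring

/-- The basic (unquotiented) contraction map. -/
def F0 (r : ConeSp n × E n → ConeSp n × E n → Prop) : (E n × E n) × ℝ → Quot r :=
  fun q => Quot.mk r
    (Quotient.mk (coneSetoid n) ((1 - cl (3 * q.2 - 2)) • q.1.1),
     (1 - cl (3 * q.2 - 1)) • (q.1.2 - cl (3 * q.2) • ut q.1.1 q.1.2))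

lemma continuous_F0 (r : ConeSp n × E n → ConeSp n × E n → Prop) :
    Continuous (F0 (n := n) r) := by
  have h1 : Continuous fun q : (E n × E n) × ℝ => ut q.1.1 q.1.2 :=
    continuous_ut.comp (continuous_fst.fst.prodMk continuous_fst.snd)
  have hc1 : Continuous fun q : (E n × E n) × ℝ => 1 - cl (3 * q.2 - 2) :=
    continuous_const.sub (continuous_cl.comp (by continuity))
  have hc2 : Continuous fun q : (E n × E n) × ℝ => 1 - cl (3 * q.2 - 1) :=
    continuous_const.sub (continuous_cl.comp (by continuity))
  have hc3 : Continuous fun q : (E n × E n) × ℝ => cl (3 * q.2) :=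
    continuous_cl.comp (by continuity)
  apply continuous_quot_mk.comp
  apply Continuous.prodMk
  · exact continuous_quot_mk.comp (hc1.smul continuous_fst.fst)
  · exact hc2.smul (continuous_fst.snd.sub (hc3.smul h1))

/-- The contraction, lifted to the cone in the first coordinate. -/
def F1 (r : ConeSp n × E n → ConeSp n × E n → Prop) : (ConeSp n × E n) × ℝ → Quot r :=
  fun q => Quotient.liftOn q.1.1 (fun v => F0 r ((v, q.1.2), q.2)) (by
    rintro v w (rfl | rfl)
    · rfl
    · show F0 r ((-w, q.1.2), q.2) = F0 r ((w, q.1.2), q.2)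
      unfold F0
      rw [ut_neg]
      exact congrArg _ (Prod.ext (Quotient.sound (Or.inr (smul_neg _ _))) rfl))

set_option maxHeartbeats 1000000 in
lemma continuous_F1 (r : ConeSp n × E n → ConeSp n × E n → Prop) :
    Continuous (F1 (n := n) r) := by
  have hq : Topology.IsQuotientMap (Quotient.mk (coneSetoid n)) := isQuotientMap_quot_mk
  have key : Continuous fun p : ConeSp n × (E n × ℝ) => F1 r ((p.1, p.2.1), p.2.2) := by
    apply hq.continuous_lift_prod_left
    have he : (fun p : E n × (E n × ℝ) =>
        F1 r ((Quotient.mk (coneSetoid n) p.1, p.2.1), p.2.2))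
        = fun p => F0 r ((p.1, p.2.1), p.2.2) := rfl
    rw [he]
    exact (continuous_F0 r).comp
      ((continuous_fst.prodMk continuous_snd.fst).prodMk continuous_snd.snd)
  exact key.comp (continuous_fst.fst.prodMk (continuous_fst.snd.prodMk continuous_snd))

theorem aux_contractible (r : ConeSp n × E n → ConeSp n × E n → Prop)
    (hr : ∀ a b, r a b → ∃ v p : E n, 1 ≤ ‖v‖ ∧
      a.1 = Quotient.mk (coneSetoid n) v ∧ b.1 = Quotient.mk (coneSetoid n) v ∧
      (∃ t : ℝ, a.2 = p + t • v) ∧ (∃ t : ℝ, b.2 = p + t • v) ∧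
      ∀ x y : E n, (∃ t : ℝ, x = p + t • v) → (∃ t : ℝ, y = p + t • v) →
        r (Quotient.mk (coneSetoid n) v, x) (Quotient.mk (coneSetoid n) v, y)) :
    ContractibleSpace (Quot r) := by
  have hwd : ∀ (s : ℝ) (a b : ConeSp n × E n), r a b → F1 r (a, s) = F1 r (b, s) := by
    intro s a b hab
    obtain ⟨v, p, hv, ha1, hb1, ⟨t₁, ha2⟩, ⟨t₂, hb2⟩, hrel⟩ := hr a b hab
    rw [show a = (Quotient.mk (coneSetoid n) v, p + t₁ • v) from Prod.ext ha1 ha2,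
        show b = (Quotient.mk (coneSetoid n) v, p + t₂ • v) from Prod.ext hb1 hb2]
    show F0 r ((v, p + t₁ • v), s) = F0 r ((v, p + t₂ • v), s)
    unfold F0
    simp only [line_sub hv]
    rcases le_or_gt 1 (3 * s) with hs | hs
    · rw [cl_of_one_le hs]
      norm_num
    · rw [cl_of_nonpos (by linarith : 3 * s - 1 ≤ 0),
        cl_of_nonpos (by linarith : 3 * s - 2 ≤ 0)]
      simp only [sub_zero, one_smul]
      exact Quot.sound (hrel _ _ ⟨_, rfl⟩ ⟨_, rfl⟩)
  let H : Quot r × ℝ → Quot r := fun q =>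
    Quot.liftOn q.1 (fun a => F1 r (a, q.2)) (fun a b hab => hwd q.2 a b hab)
  have hQ : Topology.IsQuotientMap (Quot.mk r) := isQuotientMap_quot_mk
  have hH : Continuous H := by
    apply hQ.continuous_lift_prod_left
    have he : (fun p : (ConeSp n × E n) × ℝ => H (Quot.mk r p.1, p.2)) = F1 r := rfl
    rw [he]
    exact continuous_F1 r
  have hH0 : ∀ x : Quot r, H (x, 0) = x := by
    intro x
    induction x using Quot.ind with
    | mk a =>
      obtain ⟨w, y⟩ := a
      induction w using Quotient.ind with
      | _ v =>
        show F0 r ((v, y), (0:ℝ)) = _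
        unfold F0
        norm_num [cl]
  have hH1 : ∀ x : Quot r,
      H (x, 1) = Quot.mk r (Quotient.mk (coneSetoid n) 0, 0) := by
    intro x
    induction x using Quot.ind with
    | mk a =>
      obtain ⟨w, y⟩ := a
      induction w using Quotient.ind with
      | _ v =>
        show F0 r ((v, y), (1:ℝ)) = _
        unfold F0
        norm_num [cl]
  rw [contractible_iff_id_nullhomotopic]
  refine ⟨Quot.mk r (Quotient.mk (coneSetoid n) 0, 0), ⟨?_⟩⟩
  exact
    { toFun := fun p => H (p.2, (p.1 : ℝ))
      continuous_toFun :=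
        hH.comp (continuous_snd.prodMk (continuous_subtype_val.comp continuous_fst))
      map_zero_left := fun x => hH0 x
      map_one_left := fun x => hH1 x }

end CollapsedAux

/-- Let `𝓛` be a set of lines in `ℝⁿ` and `c : 𝓛 → Cⁿ` a "height" map, assigning
to each line `l ∈ 𝓛` the class `[x_l]` of a direction vector `x_l` of `l` of norm at least `1`,
with parallel lines getting the same height.  Then the quotient `A` of `Cⁿ × ℝⁿ` obtained by
collapsing each lifted line `{c(l)} × l` (`l ∈ 𝓛`) to a point is contractible. -/
theorem collapsed_cone_contractible {n : ℕ} (hn : 1 ≤ n)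
    (𝓛 : Set (Set (E n))) (c : Set (E n) → ConeSp n)
    (hc : ∀ l ∈ 𝓛, ∃ p v : E n, v ≠ 0 ∧ 1 ≤ ‖v‖ ∧
        l = {x | ∃ t : ℝ, x = p + t • v} ∧ c l = Quotient.mk (coneSetoid n) v)
    (hpar : ∀ l₁ ∈ 𝓛, ∀ l₂ ∈ 𝓛,
        (∃ p₁ p₂ v : E n, v ≠ 0 ∧ l₁ = {x | ∃ t : ℝ, x = p₁ + t • v} ∧
          l₂ = {x | ∃ t : ℝ, x = p₂ + t • v}) → c l₁ = c l₂) :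
    ContractibleSpace (Quot fun a b : ConeSp n × E n =>
      ∃ l ∈ 𝓛, a.1 = c l ∧ b.1 = c l ∧ a.2 ∈ l ∧ b.2 ∈ l) := by
  apply CollapsedAux.aux_contractible
  rintro a b ⟨l, hl, ha1, hb1, ha2, hb2⟩
  obtain ⟨p, v, -, hv1, rfl, hcl⟩ := hc l hl
  refine ⟨v, p, hv1, ha1.trans hcl, hb1.trans hcl, ha2, hb2, ?_⟩
  intro x y hx hy
  exact ⟨_, hl, hcl.symm, hcl.symm, hx, hy⟩
end
end

section
/- Let F be a finite group of linear isometries of ℝⁿ (a finite subgroup of O(n)). Define E₀ = {y ∈ ℝⁿ : fy = y for all f ∈ F} and E₁ = {y ∈ ℝⁿ : fy = ±y for all f ∈ F, and fy = −y for at least one f ∈ F}. If l is a line in ℝⁿ with Fl = l (F leaves l invariant as a set), then l ∩ E₀ ≠ ∅, and either l ⊆ E₀, or l ∩ E₀ = {y} is a single point and l ⊆ E₁ + y. -/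
noncomputable section

/-- The isometry group of Euclidean `n`-space (which equals `O(n) ⋉ ℝⁿ`). -/
abbrev Isom (n : ℕ) := E n ≃ᵢ E n

/-- A subgroup of the isometry group of `ℝⁿ` is `n`-crystallographic if its action on `ℝⁿ`
is properly discontinuous and cocompact. -/
def IsCrystallographic {n : ℕ} (Γ : Subgroup (Isom n)) : Prop :=
  (∀ K L : Set (E n), IsCompact K → IsCompact L →
      {γ : Isom n | γ ∈ Γ ∧ (γ '' K ∩ L).Nonempty}.Finite) ∧
  ∃ K : Set (E n), IsCompact K ∧ ∀ x : E n, ∃ γ ∈ Γ, γ x ∈ K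

/-- A line in `ℝⁿ`: a one-dimensional affine subspace. -/
def IsLine {n : ℕ} (l : Set (E n)) : Prop :=
  ∃ p v : E n, v ≠ 0 ∧ l = {x | ∃ t : ℝ, x = p + t • v}

/-- A group is virtually infinite cyclic if it contains an infinite cyclic subgroup of
finite index. -/
def IsVirtuallyInfiniteCyclic (G : Type*) [Group G] : Prop :=
  ∃ H : Subgroup G, H.FiniteIndex ∧ Nonempty (H ≃* Multiplicative ℤ)

/-!
A linear isometry mapping the line `l = p + ℝv` into itself sends `v` to `cv` with `|c| = 1`,
so every `f ∈ F` maps `v` to `±v`. The centroid of the `F`-orbit of a point of `l` lies in `l`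
(convexity) and is fixed by `F` (left multiplication permutes `F`); call it `y`, so
`l = y + ℝv`. If every `f ∈ F` fixes `v` then `l ⊆ E₀`. Otherwise some `f₀` reverses `v`, so
`y + tv ∈ E₀` forces `tv = -tv`, i.e. `t = 0`, and each `tv` lies in `E₁`.
-/

open Set

section

variable {V : Type*} [NormedAddCommGroup V] [NormedSpace ℝ V]

theorem LinearIsometry.eq_or_eq_neg_of_map_eq_smul (f : V →ₗᵢ[ℝ] V) {v : V} {c : ℝ}
    (hv : v ≠ 0) (hfv : f v = c • v) : f v = v ∨ f v = -v := by
  have hc : |c| = 1 := by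
    have h := f.norm_map v
    rw [hfv, norm_smul, Real.norm_eq_abs] at h
    exact (mul_eq_right₀ (norm_ne_zero_iff.mpr hv)).mp h
  rcases abs_eq zero_le_one |>.mp hc with rfl | rfl
  · exact .inl (by simpa using hfv)
  · exact .inr (by simpa using hfv)

theorem LinearIsometry.eq_or_eq_neg_of_mapsTo_line (f : V →ₗᵢ[ℝ] V) {p v : V} (hv : v ≠ 0)
    (hf : MapsTo f {x | ∃ t : ℝ, x = p + t • v} {x | ∃ t : ℝ, x = p + t • v}) :
    f v = v ∨ f v = -v := by
  obtain ⟨a, ha⟩ := hf (show p ∈ _ from ⟨0, by simp⟩)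
  obtain ⟨b, hb⟩ := hf (show p + v ∈ _ from ⟨1, by simp⟩)
  refine f.eq_or_eq_neg_of_map_eq_smul hv (c := b - a) ?_
  rw [map_add, ha] at hb
  rw [sub_smul]
  linear_combination (norm := module) hb

theorem convex_line (p v : V) : Convex ℝ {x | ∃ t : ℝ, x = p + t • v} := by
  rintro _ ⟨a, rfl⟩ _ ⟨b, rfl⟩ α β - - hαβ
  obtain rfl : β = 1 - α := by linarith
  exact ⟨α * a + (1 - α) * b, by module⟩

theorem line_eq_of_mem {p v y : V} (hy : y ∈ {x | ∃ t : ℝ, x = p + t • v}) :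
    {x | ∃ t : ℝ, x = p + t • v} = {x | ∃ t : ℝ, x = y + t • v} := by
  obtain ⟨s, rfl⟩ := hy
  ext x
  refine ⟨fun ⟨t, ht⟩ => ⟨t - s, by rw [ht]; module⟩, fun ⟨t, ht⟩ => ⟨s + t, by rw [ht]; module⟩⟩

theorem Convex.exists_mem_fixed_of_finite_subgroup {s : Set V} (hs : Convex ℝ s)
    (F : Subgroup (V ≃ₗᵢ[ℝ] V)) [Finite F] (hne : s.Nonempty) (hF : ∀ f ∈ F, MapsTo f s s) :
    ∃ y ∈ s, ∀ f ∈ F, f y = y := by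
  obtain ⟨p, hp⟩ := hne
  have := Fintype.ofFinite F
  let c : ℝ := (Fintype.card F : ℝ)⁻¹
  -- the centroid of the orbit of `p`
  refine ⟨∑ f : F, c • (f : V ≃ₗᵢ[ℝ] V) p, ?_, fun g hg => ?_⟩
  · refine hs.sum_mem (fun _ _ => by positivity) ?_ fun f _ => hF f f.2 hp
    simp [c]
  · simp only [map_sum, map_smul]
    exact Equiv.sum_comp (Equiv.mulLeft (⟨g, hg⟩ : F)) fun f => c • (f : V ≃ₗᵢ[ℝ] V) p

end

/-- Claim 2 in the proof of Theorem 2.1. Let `F` be a finite subgroup of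
`O(n)`, `E₀` its fixed subspace and `E₁` the set of vectors `y` with `fy = ±y` for all `f ∈ F`
and `fy = -y` for some `f ∈ F`.  If `l` is a line with `Fl = l`, then `l ∩ E₀ ≠ ∅` and either
`l ⊆ E₀`, or `l ∩ E₀` is a single point `{y}` and `l ⊆ E₁ + y`. -/
theorem invariant_line_of_finite_orthogonal {n : ℕ}
    (F : Subgroup (E n ≃ₗᵢ[ℝ] E n)) (hF : (F : Set (E n ≃ₗᵢ[ℝ] E n)).Finite)
    (E₀ E₁ : Set (E n))
    (hE₀ : E₀ = {y : E n | ∀ f ∈ F, f y = y})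
    (hE₁ : E₁ = {y : E n | (∀ f ∈ F, f y = y ∨ f y = -y) ∧ ∃ f ∈ F, f y = -y})
    (l : Set (E n)) (hl : IsLine l) (hinv : ∀ f ∈ F, f '' l = l) :
    (l ∩ E₀).Nonempty ∧
      (l ⊆ E₀ ∨ ∃ y : E n, l ∩ E₀ = {y} ∧ l ⊆ (fun e => e + y) '' E₁) := by
  obtain ⟨p, v, hv, rfl⟩ := hl
  subst hE₀ hE₁
  have hmaps (f) (hf : f ∈ F) : MapsTo f _ _ := mapsTo_iff_image_subset.mpr (hinv f hf).subset
  have hdir (f) (hf : f ∈ F) : f v = v ∨ f v = -v :=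
    f.toLinearIsometry.eq_or_eq_neg_of_mapsTo_line hv (hmaps f hf)
  have : Finite F := hF.to_subtype
  obtain ⟨y, hyl, hy⟩ :=
    (convex_line p v).exists_mem_fixed_of_finite_subgroup F ⟨p, 0, by simp⟩ hmaps
  rw [line_eq_of_mem hyl]
  refine ⟨⟨y, ⟨0, by simp⟩, hy⟩, ?_⟩
  by_cases hfix : ∀ f ∈ F, f v = v
  · left
    rintro _ ⟨t, rfl⟩ f hf
    simp [hy f hf, hfix f hf]
  push Not at hfix
  obtain ⟨f₀, hf₀, hf₀v⟩ := hfix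
  replace hf₀v := (hdir f₀ hf₀).resolve_left hf₀v
  refine .inr ⟨y, ?_, ?_⟩
  · refine eq_singleton_iff_unique_mem.mpr ⟨⟨⟨0, by simp⟩, hy⟩, ?_⟩
    rintro _ ⟨⟨t, rfl⟩, hx⟩
    have : IsAddTorsionFree (E n) := .of_isTorsionFree ℝ _
    simpa [hy f₀ hf₀, hf₀v, neg_eq_self] using hx f₀ hf₀
  · rintro _ ⟨t, rfl⟩
    refine ⟨t • v, ⟨fun f hf => ?_, f₀, hf₀, by simp [hf₀v]⟩, add_comm _ _⟩
    rcases hdir f hf with h | h <;> simp [h]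
end
end

section
/- Let Γ be a 3-crystallographic group and let G ≤ Γ be a virtually infinite cyclic subgroup. If G leaves invariant two different lines in ℝ³, then G is trivial or isomorphic to one of the groups ℤ, D_∞, ℤ×ℤ₂, D_∞×ℤ₂. -/
noncomputable section

namespace Cryst
open RealInnerProductSpace

def Amap (g : Isom 3) : E 3 ≃ₗᵢ[ℝ] E 3 := g.toRealLinearIsometryEquiv

lemma Amap_apply (g : Isom 3) (x : E 3) : Amap g x = g x - g 0 := by simp [Amap]

lemma Amap_mul (g h : Isom 3) (x : E 3) : Amap (g * h) x = Amap g (Amap h x) := by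
  rw [Amap_apply (g*h) x, Amap_apply h x, map_sub (Amap g), Amap_apply g (h x),
    Amap_apply g (h 0), IsometryEquiv.mul_apply, IsometryEquiv.mul_apply]
  abel

lemma Amap_sub (g : Isom 3) (x y : E 3) : g x - g y = Amap g (x - y) := by
  rw [map_sub, Amap_apply, Amap_apply]; abel

def Det (g : Isom 3) : ℝ := LinearMap.det ((Amap g).toLinearEquiv : E 3 →ₗ[ℝ] E 3)

lemma Det_mul (g h : Isom 3) : Det (g * h) = Det g * Det h := by
  have h1 : ((Amap (g*h)).toLinearEquiv : E 3 →ₗ[ℝ] E 3)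
      = ((Amap g).toLinearEquiv : E 3 →ₗ[ℝ] E 3) ∘ₗ ((Amap h).toLinearEquiv : E 3 →ₗ[ℝ] E 3) :=
    LinearMap.ext fun x => Amap_mul g h x
  rw [Det, h1, LinearMap.det_comp]; rfl

lemma Det_one : Det (1 : Isom 3) = 1 := by
  have h1 : ((Amap (1 : Isom 3)).toLinearEquiv : E 3 →ₗ[ℝ] E 3) = LinearMap.id := by
    apply LinearMap.ext; intro x
    show Amap 1 x = x
    rw [Amap_apply]; simp
  rw [Det, h1, LinearMap.det_id]

lemma Det_inv (g : Isom 3) : Det g * Det g⁻¹ = 1 := by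
  rw [← Det_mul, mul_inv_cancel, Det_one]

lemma Det_sq_ne_neg_one (g : Isom 3) : Det (g * g) ≠ -1 := by
  rw [Det_mul]
  intro h
  nlinarith [sq_nonneg (Det g), Det_inv g]

open Submodule in
lemma fix_two (A : E 3 ≃ₗᵢ[ℝ] E 3) (a b : E 3) (h : LinearIndependent ℝ ![a, b])
    (ha : A a = a) (hb : A b = b) :
    (∀ x, A x = x) ∨ LinearMap.det ((A.toLinearEquiv : E 3 ≃ₗ[ℝ] E 3) : E 3 →ₗ[ℝ] E 3) = -1 := by
  classical
  set W : Submodule ℝ (E 3) := Submodule.span ℝ (Set.range ![a, b]) with hWdef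
  have hW2 : Module.finrank ℝ W = 2 := by
    rw [finrank_span_eq_card h]; simp
  have hE3 : Module.finrank ℝ (E 3) = 3 := finrank_euclideanSpace_fin
  have hW1 : Module.finrank ℝ Wᗮ = 1 := by
    have := Submodule.finrank_add_finrank_orthogonal (K := W)
    omega
  have hWne : Wᗮ ≠ ⊥ := by
    intro hbot
    rw [hbot] at hW1
    simp at hW1
  obtain ⟨c, hcW, hc0⟩ := Submodule.ne_bot_iff _ |>.1 hWne
  have haW : a ∈ W := Submodule.subset_span ⟨0, rfl⟩
  have hbW : b ∈ W := Submodule.subset_span ⟨1, rfl⟩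
  have hspan : Submodule.span ℝ {c} = Wᗮ := by
    apply Submodule.eq_of_le_of_finrank_eq
    · rw [Submodule.span_le, Set.singleton_subset_iff]; exact hcW
    · rw [finrank_span_singleton hc0, hW1]
  have hAc : A c ∈ Wᗮ := by
    rw [Submodule.mem_orthogonal]
    intro u huW
    induction huW using Submodule.span_induction with
    | mem x hx =>
      obtain ⟨i, rfl⟩ := hx
      fin_cases i
      · show (inner ℝ a (A c) : ℝ) = 0
        rw [← ha, A.inner_map_map]
        exact (Submodule.mem_orthogonal W c).1 hcW a haW
      · show (inner ℝ b (A c) : ℝ) = 0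
        rw [← hb, A.inner_map_map]
        exact (Submodule.mem_orthogonal W c).1 hcW b hbW
    | zero => simp
    | add x y _ _ hx hy => rw [inner_add_left, hx, hy, add_zero]
    | smul t x _ hx => rw [inner_smul_left, hx, mul_zero]
  rw [← hspan, Submodule.mem_span_singleton] at hAc
  obtain ⟨μ, hμ⟩ := hAc
  have hμ1 : μ = 1 ∨ μ = -1 := by
    have h1 : ‖A c‖ = ‖c‖ := A.norm_map c
    rw [← hμ, norm_smul] at h1
    have : |μ| = 1 := by
      have hcpos : ‖c‖ ≠ 0 := norm_ne_zero_iff.2 hc0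
      field_simp at h1
      tauto
    rcases (abs_eq (by norm_num : (0:ℝ) ≤ 1)).1 this with h | h
    · exact Or.inl h
    · exact Or.inr h
  have hcnW : c ∉ W := by
    intro hcWmem
    apply hc0
    have := (Submodule.mem_orthogonal W c).1 hcW c hcWmem
    rwa [inner_self_eq_zero] at this
  have hli : LinearIndependent ℝ (Fin.cons c ![a, b] : Fin 3 → E 3) := by
    rw [linearIndependent_fin_cons]
    exact ⟨h, by rwa [← hWdef]⟩
  have hcard : Fintype.card (Fin 3) = Module.finrank ℝ (E 3) := by simp [hE3]
  set B : Module.Basis (Fin 3) ℝ (E 3) := basisOfLinearIndependentOfCardEqFinrank hli hcard with hBdef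
  have hB : ∀ i, B i = (Fin.cons c ![a, b] : Fin 3 → E 3) i := fun i => by
    rw [hBdef, coe_basisOfLinearIndependentOfCardEqFinrank]
  have hB0 : B 0 = c := hB 0
  have hB1 : B 1 = a := hB 1
  have hB2 : B 2 = b := hB 2
  have hAB0 : A (B 0) = μ • B 0 := by rw [hB0, ← hμ]
  have hAB1 : A (B 1) = B 1 := by rw [hB1, ha]
  have hAB2 : A (B 2) = B 2 := by rw [hB2, hb]
  set f : E 3 →ₗ[ℝ] E 3 := ((A.toLinearEquiv : E 3 ≃ₗ[ℝ] E 3) : E 3 →ₗ[ℝ] E 3) with hfdef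
  have hf : ∀ x, f x = A x := fun x => rfl
  set M := LinearMap.toMatrix B B f with hMdef
  have hM : ∀ i j, M i j = (B.repr (A (B j))) i := fun i j => by
    rw [hMdef, LinearMap.toMatrix_apply, hf]
  have hdet : LinearMap.det f = μ := by
    rw [← LinearMap.det_toMatrix B f, ← hMdef, Matrix.det_fin_three]
    have hM0 : ∀ i, M i 0 = μ * (Finsupp.single (0 : Fin 3) (1:ℝ)) i := fun i => by
      rw [hM, hAB0, map_smul, ← B.repr_self 0]; rfl
    have hM1 : ∀ i, M i 1 = (Finsupp.single (1 : Fin 3) (1:ℝ)) i := fun i => by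
      rw [hM, hAB1, ← B.repr_self 1]
    have hM2 : ∀ i, M i 2 = (Finsupp.single (2 : Fin 3) (1:ℝ)) i := fun i => by
      rw [hM, hAB2, ← B.repr_self 2]
    rw [hM0 0, hM0 1, hM0 2, hM1 0, hM1 1, hM1 2, hM2 0, hM2 1, hM2 2]
    simp [Finsupp.single_apply]
  rcases hμ1 with h1 | h1
  · left
    intro x
    have : f = LinearMap.id := by
      apply B.ext
      intro i
      fin_cases i
      · simpa [h1, hf] using hAB0
      · simpa [hf] using hAB1
      · simpa [hf] using hAB2
    have := congrArg (fun (g : E 3 →ₗ[ℝ] E 3) => g x) this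
    simpa [hf] using this
  · right
    rw [hdet, h1]

lemma eq_one_of_Amap_id (g : Isom 3) (x₀ : E 3) (hx₀ : g x₀ = x₀)
    (hA : ∀ x, Amap g x = x) : g = 1 := by
  have hg0 : g 0 = 0 := by
    have := hA x₀
    rw [Amap_apply, hx₀] at this
    have h2 : g 0 = x₀ - x₀ := by rw [← sub_sub_self x₀ (g 0), this]
    simpa using h2
  apply IsometryEquiv.ext
  intro x
  have := hA x
  rw [Amap_apply, hg0, sub_zero] at this
  simpa using this

lemma fixline_det (p v q w : E 3) (hv : v ≠ 0) (hw : w ≠ 0)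
    (hdisj : {x : E 3 | ∃ t : ℝ, x = p + t • v} ∩ {x : E 3 | ∃ t : ℝ, x = q + t • w} = ∅)
    (g : Isom 3) (hfix : ∀ t : ℝ, g (p + t • v) = p + t • v)
    (hl2 : ∀ x : E 3, (∃ t : ℝ, x = q + t • w) → ∃ t : ℝ, g x = q + t • w) :
    g = 1 ∨ Det g = -1 := by
  have hgp : g p = p := by simpa using hfix 0
  have hnotin : ∀ (s t : ℝ), q + s • w ≠ p + t • v := by
    intro s t hst
    have hm : q + s • w ∈ ({x : E 3 | ∃ t : ℝ, x = p + t • v} ∩ {x : E 3 | ∃ t : ℝ, x = q + t • w}) :=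
      ⟨⟨t, hst⟩, ⟨s, rfl⟩⟩
    rw [hdisj] at hm
    exact hm
  have hAv : Amap g v = v := by
    have h1 : g (p + v) = p + v := by simpa using hfix 1
    have h2 := Amap_sub g (p + v) p
    rw [h1, hgp, add_sub_cancel_left] at h2
    exact h2.symm
  obtain ⟨s₀, hs₀⟩ := hl2 q ⟨0, by simp⟩
  obtain ⟨s₁, hs₁⟩ := hl2 (q + w) ⟨1, by simp⟩
  have hAw : Amap g w = (s₁ - s₀) • w := by
    have h2 := Amap_sub g (q + w) q
    rw [hs₁, hs₀] at h2
    have e1 : q + w - q = w := by abel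
    rw [e1] at h2
    rw [← h2, sub_smul]
    abel
  have hlam : s₁ - s₀ = 1 ∨ s₁ - s₀ = -1 := by
    have h1 : ‖Amap g w‖ = ‖w‖ := (Amap g).norm_map w
    rw [hAw, norm_smul] at h1
    have hwn : ‖w‖ ≠ 0 := norm_ne_zero_iff.2 hw
    have habs : |s₁ - s₀| = 1 := by
      field_simp at h1
      tauto
    exact (abs_eq (by norm_num : (0:ℝ) ≤ 1)).1 habs
  have hAu : Amap g (q - p) = (q - p) + s₀ • w := by
    have h2 := Amap_sub g q p
    rw [hs₀, hgp] at h2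
    rw [← h2]; abel
  have hvv : ⟪v, v⟫ ≠ 0 := by
    rw [real_inner_self_eq_norm_sq]
    exact pow_ne_zero 2 (norm_ne_zero_iff.2 hv)
  rcases hlam with hl | hl
  · -- A w = w
    rw [hl, one_smul] at hAw
    by_cases hcw : ∃ cc : ℝ, w = cc • v
    · obtain ⟨cc, hcc⟩ := hcw
      have hinner : ⟪Amap g (q - p), v⟫ = ⟪q - p, v⟫ := by
        conv_lhs => rw [← hAv]
        exact (Amap g).inner_map_map (q - p) v
      rw [hAu, inner_add_left, hcc, smul_smul, real_inner_smul_left] at hinner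
      have hz : s₀ * cc = 0 := by
        have : (s₀ * cc) * ⟪v, v⟫ = 0 := by linarith
        exact (mul_eq_zero.1 this).resolve_right hvv
      have hAu' : Amap g (q - p) = q - p := by
        rw [hAu, hcc, smul_smul, hz, zero_smul, add_zero]
      have hli : LinearIndependent ℝ ![q - p, v] := by
        rw [linearIndependent_fin2]
        refine ⟨hv, fun a ha => ?_⟩
        simp only [Matrix.cons_val_one, Matrix.head_cons, Matrix.cons_val_zero] at ha
        apply hnotin 0 a
        rw [zero_smul, add_zero]
        rw [eq_comm, sub_eq_iff_eq_add] at ha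
        rw [ha]; abel
      rcases fix_two (Amap g) (q - p) v hli hAu' hAv with hid | hdet
      · exact Or.inl (eq_one_of_Amap_id g p hgp hid)
      · exact Or.inr hdet
    · push_neg at hcw
      have hli : LinearIndependent ℝ ![w, v] := by
        rw [linearIndependent_fin2]
        refine ⟨hv, fun a ha => ?_⟩
        simp only [Matrix.cons_val_one, Matrix.head_cons, Matrix.cons_val_zero] at ha
        exact hcw a ha.symm
      rcases fix_two (Amap g) w v hli hAw hAv with hid | hdet
      · exact Or.inl (eq_one_of_Amap_id g p hgp hid)
      · exact Or.inr hdet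
  · -- A w = -w
    rw [hl, neg_one_smul] at hAw
    set u' : E 3 := (q - p) + (s₀ / 2) • w with hu'
    have hAu' : Amap g u' = u' := by
      rw [hu', map_add, map_smul, hAu, hAw, smul_neg, add_assoc, ← sub_eq_add_neg,
        ← sub_smul]
      have : s₀ - s₀ / 2 = s₀ / 2 := by ring
      rw [this]
    have hli : LinearIndependent ℝ ![u', v] := by
      rw [linearIndependent_fin2]
      refine ⟨hv, fun a ha => ?_⟩
      simp only [Matrix.cons_val_one, Matrix.head_cons, Matrix.cons_val_zero] at ha
      apply hnotin (s₀ / 2) a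
      have : q + (s₀ / 2) • w = p + a • v := by
        rw [ha, hu']; abel
      exact this
    rcases fix_two (Amap g) u' v hli hAu' hAv with hid | hdet
    · exfalso
      have h1 := hid w
      rw [hAw] at h1
      have h2 : (2:ℝ) • w = 0 := by
        rw [two_smul]
        nth_rewrite 1 [← h1]
        abel
      rcases smul_eq_zero.1 h2 with h3 | h3
      · norm_num at h3
      · exact hw h3
    · exact Or.inr hdet


lemma line_param (p v x y : E 3) (t₁ t₂ : ℝ) (hx : x = p + t₁ • v) (hy : y = p + t₂ • v)
    (hne : t₁ ≠ t₂) :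
    {z : E 3 | ∃ t : ℝ, z = p + t • v} = {z : E 3 | ∃ t : ℝ, z = x + t • (y - x)} := by
  have hyx : y - x = (t₂ - t₁) • v := by rw [hx, hy, sub_smul]; abel
  have hd : t₂ - t₁ ≠ 0 := sub_ne_zero.2 (Ne.symm hne)
  ext z
  simp only [Set.mem_setOf_eq]
  constructor
  · rintro ⟨t, rfl⟩
    refine ⟨(t - t₁)/(t₂ - t₁), ?_⟩
    rw [hyx, hx, smul_smul, div_mul_cancel₀ _ hd]
    module
  · rintro ⟨t, rfl⟩
    refine ⟨t₁ + t * (t₂ - t₁), ?_⟩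
    rw [hyx, hx, smul_smul]
    module

def epsF (v : E 3) (g : Isom 3) : ℝ := ⟪Amap g v, v⟫ / ⟪v, v⟫

def tauF (p v : E 3) (g : Isom 3) : ℝ := ⟪g p - p, v⟫ / ⟪v, v⟫

lemma inner_vv_ne (v : E 3) (hv : v ≠ 0) : ⟪v, v⟫ ≠ 0 := by
  rw [real_inner_self_eq_norm_sq]
  exact pow_ne_zero 2 (norm_ne_zero_iff.2 hv)

lemma epsF_eq {v : E 3} (hv : v ≠ 0) (g : Isom 3) (e : ℝ) (h : Amap g v = e • v) :
    epsF v g = e := by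
  rw [epsF, h, real_inner_smul_left, mul_div_assoc, div_self (inner_vv_ne v hv), mul_one]

lemma tauF_eq {p v : E 3} (hv : v ≠ 0) (g : Isom 3) (t : ℝ) (h : g p = p + t • v) :
    tauF p v g = t := by
  rw [tauF, h, add_sub_cancel_left, real_inner_smul_left, mul_div_assoc,
    div_self (inner_vv_ne v hv), mul_one]

/-- the hypothesis that `g` maps the line through `p` in direction `v` to itself -/
def LineHyp (G : Subgroup (Isom 3)) (p v : E 3) : Prop :=
  ∀ g ∈ G, ∀ t : ℝ, ∃ s : ℝ, g (p + t • v) = p + s • v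

section Eps

variable {G : Subgroup (Isom 3)} {p v : E 3}

lemma base (hv : v ≠ 0) (hline : LineHyp G p v) {g : Isom 3} (hg : g ∈ G) :
    Amap g v = epsF v g • v ∧ g p = p + tauF p v g • v ∧ (epsF v g = 1 ∨ epsF v g = -1) := by
  obtain ⟨t₀, ht₀⟩ := hline g hg 0
  rw [zero_smul, add_zero] at ht₀
  obtain ⟨t₁, ht₁⟩ := hline g hg 1
  rw [one_smul] at ht₁
  have hAv : Amap g v = (t₁ - t₀) • v := by
    have h2 := Amap_sub g (p + v) p
    rw [ht₁, ht₀] at h2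
    have e1 : p + v - p = v := by abel
    rw [e1] at h2
    rw [← h2, sub_smul]
    abel
  have hτ : tauF p v g = t₀ := tauF_eq hv g t₀ ht₀
  have hε : epsF v g = t₁ - t₀ := epsF_eq hv g _ hAv
  have hor : epsF v g = 1 ∨ epsF v g = -1 := by
    have h1 : ‖Amap g v‖ = ‖v‖ := (Amap g).norm_map v
    rw [hAv, norm_smul] at h1
    have hwn : ‖v‖ ≠ 0 := norm_ne_zero_iff.2 hv
    have habs : |t₁ - t₀| = 1 := by
      field_simp at h1
      tauto
    rw [hε]
    exact (abs_eq (by norm_num : (0:ℝ) ≤ 1)).1 habs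
  exact ⟨by rw [hε]; exact hAv, by rw [hτ]; exact ht₀, hor⟩

lemma happ (hv : v ≠ 0) (hline : LineHyp G p v) {g : Isom 3} (hg : g ∈ G) (t : ℝ) :
    g (p + t • v) = p + (tauF p v g + t * epsF v g) • v := by
  obtain ⟨hAv, hgp, _⟩ := base hv hline hg
  have h2 := Amap_sub g (p + t • v) p
  have e1 : p + t • v - p = t • v := by abel
  rw [e1, map_smul, hAv, hgp] at h2
  have h3 : g (p + t • v) = p + tauF p v g • v + t • epsF v g • v := by
    rw [← h2]; abel
  rw [h3, smul_smul, add_smul]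
  abel

lemma eps_mul (hv : v ≠ 0) (hline : LineHyp G p v) {g h : Isom 3} (hg : g ∈ G) (hh : h ∈ G) :
    epsF v (g * h) = epsF v g * epsF v h := by
  obtain ⟨hAg, -, -⟩ := base hv hline hg
  obtain ⟨hAh, -, -⟩ := base hv hline hh
  apply epsF_eq hv
  rw [Amap_mul, hAh, map_smul, hAg, smul_smul, mul_comm]

lemma tau_mul (hv : v ≠ 0) (hline : LineHyp G p v) {g h : Isom 3} (hg : g ∈ G) (hh : h ∈ G) :
    tauF p v (g * h) = tauF p v g + epsF v g * tauF p v h := by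
  obtain ⟨-, hgp, -⟩ := base hv hline hh
  apply tauF_eq hv
  rw [IsometryEquiv.mul_apply, hgp, happ hv hline hg, add_smul, mul_comm]
  rw [add_smul]

lemma eps_one (hv : v ≠ 0) : epsF v (1 : Isom 3) = 1 := by
  apply epsF_eq hv
  rw [Amap_apply, one_smul]
  simp

lemma tau_one (hv : v ≠ 0) (p : E 3) : tauF p v (1 : Isom 3) = 0 := by
  apply tauF_eq hv
  simp

lemma eps_inv (hv : v ≠ 0) (hline : LineHyp G p v) {g : Isom 3} (hg : g ∈ G) :
    epsF v g⁻¹ = epsF v g := by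
  have h1 : epsF v g * epsF v g⁻¹ = 1 := by
    rw [← eps_mul hv hline hg (inv_mem hg), mul_inv_cancel, eps_one hv]
  obtain ⟨-, -, hor⟩ := base hv hline hg
  rcases hor with h | h <;> rw [h] at h1 ⊢ <;> linarith

lemma tau_inv (hv : v ≠ 0) (hline : LineHyp G p v) {g : Isom 3} (hg : g ∈ G) :
    tauF p v g⁻¹ = - (epsF v g * tauF p v g) := by
  have h1 : tauF p v g + epsF v g * tauF p v g⁻¹ = 0 := by
    rw [← tau_mul hv hline hg (inv_mem hg), mul_inv_cancel, tau_one hv]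
  obtain ⟨-, -, hor⟩ := base hv hline hg
  rcases hor with h | h <;> rw [h] at h1 ⊢ <;> linarith

end Eps

end Cryst

set_option maxHeartbeats 1000000 in
open Cryst RealInnerProductSpace in
theorem two_invariant_lines_classification'
    (Γ G : Subgroup (Isom 3))
    (hΓ : (∀ K L : Set (E 3), IsCompact K → IsCompact L →
      {γ : Isom 3 | γ ∈ Γ ∧ (γ '' K ∩ L).Nonempty}.Finite) ∧
      ∃ K : Set (E 3), IsCompact K ∧ ∀ x : E 3, ∃ γ ∈ Γ, γ x ∈ K)
    (hGΓ : G ≤ Γ)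
    (hvc : ∃ H : Subgroup G, H.FiniteIndex ∧ Nonempty (H ≃* Multiplicative ℤ))
    (l₁ l₂ : Set (E 3))
    (hl₁ : ∃ p v : E 3, v ≠ 0 ∧ l₁ = {x | ∃ t : ℝ, x = p + t • v})
    (hl₂ : ∃ p v : E 3, v ≠ 0 ∧ l₂ = {x | ∃ t : ℝ, x = p + t • v})
    (hne : l₁ ≠ l₂)
    (hinv₁ : ∀ g ∈ G, g '' l₁ = l₁) (hinv₂ : ∀ g ∈ G, g '' l₂ = l₂) :
    G = ⊥ ∨
    Nonempty (G ≃* Multiplicative ℤ) ∨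
    Nonempty (G ≃* DihedralGroup 0) ∨
    Nonempty (G ≃* (Multiplicative ℤ × Multiplicative (ZMod 2))) ∨
    Nonempty (G ≃* (DihedralGroup 0 × Multiplicative (ZMod 2))) := by
  classical
  obtain ⟨p, v, hv, rfl⟩ := hl₁
  obtain ⟨q, w, hw, rfl⟩ := hl₂
  -- G is infinite
  obtain ⟨H, hHfin, ⟨eH⟩⟩ := hvc
  have hGinf : Infinite ↥G := by
    have h1 : Infinite ↥H := (Equiv.infinite_iff eH.toEquiv).2 inferInstance
    exact Infinite.of_injective (fun x : ↥H => (x : ↥G)) Subtype.coe_injective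
  -- membership facts
  have hmem₁ : ∀ g ∈ G, ∀ x : E 3, (∃ t : ℝ, x = p + t • v) → ∃ s : ℝ, g x = p + s • v := by
    intro g hg x hx
    have h1 : g x ∈ {x : E 3 | ∃ t : ℝ, x = p + t • v} := by
      rw [← hinv₁ g hg]; exact ⟨x, hx, rfl⟩
    exact h1
  have hmem₂ : ∀ g ∈ G, ∀ x : E 3, (∃ t : ℝ, x = q + t • w) → ∃ s : ℝ, g x = q + s • w := by
    intro g hg x hx
    have h1 : g x ∈ {x : E 3 | ∃ t : ℝ, x = q + t • w} := by
      rw [← hinv₂ g hg]; exact ⟨x, hx, rfl⟩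
    exact h1
  have hline : LineHyp G p v := fun g hg t => hmem₁ g hg _ ⟨t, rfl⟩
  -- case: the lines intersect
  rcases Set.eq_empty_or_nonempty
    ({x : E 3 | ∃ t : ℝ, x = p + t • v} ∩ {x : E 3 | ∃ t : ℝ, x = q + t • w}) with hdisj | hint
  swap
  · -- intersection nonempty: contradiction with infiniteness
    exfalso
    obtain ⟨x₀, hx₀1, hx₀2⟩ := hint
    have hfixx : ∀ g ∈ G, g x₀ = x₀ := by
      intro g hg
      by_contra hneq
      apply hne
      obtain ⟨t₁, ht₁⟩ := hx₀1
      obtain ⟨s₁, hs₁⟩ := hx₀2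
      obtain ⟨t₂, ht₂⟩ := hmem₁ g hg x₀ ⟨t₁, ht₁⟩
      obtain ⟨s₂, hs₂⟩ := hmem₂ g hg x₀ ⟨s₁, hs₁⟩
      have htne : t₁ ≠ t₂ := by
        intro hEq
        apply hneq
        rw [ht₂, ← hEq, ← ht₁]
      have hsne : s₁ ≠ s₂ := by
        intro hEq
        apply hneq
        rw [hs₂, ← hEq, ← hs₁]
      rw [line_param p v x₀ (g x₀) t₁ t₂ ht₁ ht₂ htne,
        line_param q w x₀ (g x₀) s₁ s₂ hs₁ hs₂ hsne]
    have hfin := hΓ.1 {x₀} {x₀} isCompact_singleton isCompact_singleton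
    have hsub : (G : Set (Isom 3)) ⊆ {γ : Isom 3 | γ ∈ Γ ∧ (γ '' {x₀} ∩ {x₀}).Nonempty} := by
      intro g hg
      exact ⟨hGΓ hg, ⟨x₀, ⟨x₀, rfl, hfixx g hg⟩, rfl⟩⟩
    have h1 : (G : Set (Isom 3)).Finite := hfin.subset hsub
    have h2 : (G : Set (Isom 3)).Infinite := Set.infinite_coe_iff.1 hGinf
    exact h2 h1
  -- main case: the lines are disjoint
  -- notation
  have hNdet : ∀ g, g ∈ G → epsF v g = 1 → tauF p v g = 0 → g = 1 ∨ Det g = -1 := by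
    intro g hg hge hgt
    apply fixline_det p v q w hv hw hdisj g
    · intro t
      rw [happ hv hline hg t, hgt, hge, mul_one, zero_add]
    · intro x hx
      exact hmem₂ g hg x hx
  have hNuniq : ∀ σ σ', (σ ∈ G ∧ epsF v σ = 1 ∧ tauF p v σ = 0) →
      (σ' ∈ G ∧ epsF v σ' = 1 ∧ tauF p v σ' = 0) → σ ≠ 1 → σ' ≠ 1 → σ = σ' := by
    rintro σ σ' ⟨hσG, hσε, hστ⟩ ⟨hσ'G, hσ'ε, hσ'τ⟩ hσ1 hσ'1
    have hdσ : Det σ = -1 := ((hNdet σ hσG hσε hστ).resolve_left hσ1)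
    have hdσ' : Det σ' = -1 := ((hNdet σ' hσ'G hσ'ε hσ'τ).resolve_left hσ'1)
    have hεinv : epsF v σ⁻¹ = 1 := by rw [eps_inv hv hline hσG, hσε]
    have hτinv : tauF p v σ⁻¹ = 0 := by rw [tau_inv hv hline hσG, hστ, mul_zero, neg_zero]
    have hεh : epsF v (σ⁻¹ * σ') = 1 := by
      rw [eps_mul hv hline (inv_mem hσG) hσ'G, hεinv, hσ'ε, mul_one]
    have hτh : tauF p v (σ⁻¹ * σ') = 0 := by
      rw [tau_mul hv hline (inv_mem hσG) hσ'G, hτinv, hεinv, hσ'τ, mul_zero, add_zero]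
    have hdinv : Det σ⁻¹ = -1 := by
      have := Det_inv σ
      rw [hdσ] at this
      linarith
    have hdh : Det (σ⁻¹ * σ') = 1 := by rw [Det_mul, hdinv, hdσ']; norm_num
    have h1 : σ⁻¹ * σ' = 1 := by
      rcases hNdet _ (mul_mem (inv_mem hσG) hσ'G) hεh hτh with h | h
      · exact h
      · rw [hdh] at h; norm_num at h
    rw [← mul_one σ, ← h1, ← mul_assoc, mul_inv_cancel, one_mul]
  have hsq : ∀ g ∈ G, epsF v g = -1 → g * g = 1 := by
    intro g hg hge
    have hεh : epsF v (g * g) = 1 := by rw [eps_mul hv hline hg hg, hge]; norm_num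
    have hτh : tauF p v (g * g) = 0 := by rw [tau_mul hv hline hg hg, hge]; ring
    rcases hNdet _ (mul_mem hg hg) hεh hτh with h | h
    · exact h
    · exact absurd h (Det_sq_ne_neg_one g)
  have hNsq : ∀ σ, σ ∈ G → epsF v σ = 1 → tauF p v σ = 0 → σ * σ = 1 := by
    intro σ hσG hσε hστ
    have hεh : epsF v (σ * σ) = 1 := by rw [eps_mul hv hline hσG hσG, hσε, mul_one]
    have hτh : tauF p v (σ * σ) = 0 := by
      rw [tau_mul hv hline hσG hσG, hσε, hστ]; ring
    rcases hNdet _ (mul_mem hσG hσG) hεh hτh with h | h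
    · exact h
    · exact absurd h (Det_sq_ne_neg_one σ)
  have hcent : ∀ σ, (σ ∈ G ∧ epsF v σ = 1 ∧ tauF p v σ = 0) → σ ≠ 1 →
      ∀ g ∈ G, g * σ = σ * g := by
    rintro σ ⟨hσG, hσε, hστ⟩ hσ1 g hg
    obtain ⟨-, -, hεor⟩ := base hv hline hg
    have hεsq : epsF v g * epsF v g = 1 := by rcases hεor with h | h <;> rw [h] <;> norm_num
    have hh1 : g * σ * g⁻¹ ∈ G := mul_mem (mul_mem hg hσG) (inv_mem hg)
    have hεh : epsF v (g * σ * g⁻¹) = 1 := by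
      rw [eps_mul hv hline (mul_mem hg hσG) (inv_mem hg), eps_mul hv hline hg hσG,
        eps_inv hv hline hg, hσε, mul_one]
      exact hεsq
    have hτh : tauF p v (g * σ * g⁻¹) = 0 := by
      rw [tau_mul hv hline (mul_mem hg hσG) (inv_mem hg), tau_mul hv hline hg hσG,
        eps_mul hv hline hg hσG, tau_inv hv hline hg, hσε, hστ]
      rcases hεor with h | h <;> rw [h] <;> ring
    have hne1 : g * σ * g⁻¹ ≠ 1 := by
      intro h
      apply hσ1
      have : σ = g⁻¹ * (g * σ * g⁻¹) * g := by group
      rw [h] at this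
      rw [this]
      group
    have := hNuniq _ _ ⟨hh1, hεh, hτh⟩ ⟨hσG, hσε, hστ⟩ hne1 hσ1
    calc g * σ = (g * σ * g⁻¹) * g := by group
    _ = σ * g := by rw [this]
  -- the translation subgroup
  set T : AddSubgroup ℝ :=
    { carrier := {t : ℝ | ∃ g, g ∈ G ∧ epsF v g = 1 ∧ tauF p v g = t}
      zero_mem' := ⟨1, one_mem G, eps_one hv, tau_one hv p⟩
      add_mem' := by
        rintro t t' ⟨g, hg, hgε, hgτ⟩ ⟨g', hg', hg'ε, hg'τ⟩
        exact ⟨g * g', mul_mem hg hg', by rw [eps_mul hv hline hg hg', hgε, hg'ε, mul_one],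
          by rw [tau_mul hv hline hg hg', hgε, hgτ, hg'τ, one_mul]⟩
      neg_mem' := by
        rintro t ⟨g, hg, hgε, hgτ⟩
        exact ⟨g⁻¹, inv_mem hg, by rw [eps_inv hv hline hg, hgε],
          by rw [tau_inv hv hline hg, hgε, hgτ, one_mul]⟩ } with hTdef
  have hTmem : ∀ t : ℝ, (t ∈ T) = ∃ g, g ∈ G ∧ epsF v g = 1 ∧ tauF p v g = t := fun t => rfl
  -- bounded parts of G are finite
  have hband : ∀ R : ℝ, {g : Isom 3 | g ∈ G ∧ dist (g p) p ≤ R}.Finite := by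
    intro R
    have h1 := hΓ.1 {p} (Metric.closedBall p R) isCompact_singleton (isCompact_closedBall p R)
    apply h1.subset
    rintro g ⟨hg, hd⟩
    exact ⟨hGΓ hg, ⟨g p, ⟨p, rfl, rfl⟩, Metric.mem_closedBall.2 hd⟩⟩
  have hdistτ : ∀ g ∈ G, dist (g p) p = |tauF p v g| * ‖v‖ := by
    intro g hg
    obtain ⟨-, hgp, -⟩ := base hv hline hg
    rw [hgp, dist_eq_norm, add_sub_cancel_left, norm_smul, Real.norm_eq_abs]
  rcases AddSubgroup.dense_or_cyclic T with hdense | ⟨a, hTa⟩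
  · -- dense: contradiction with proper discontinuity
    exfalso
    have hmemIoo : ∀ n : ℕ, ∃ t ∈ (T : Set ℝ), t ∈ Set.Ioo (1/((n:ℝ)+2)) (1/((n:ℝ)+1)) := by
      intro n
      apply hdense.exists_mem_open isOpen_Ioo
      refine Set.nonempty_Ioo.2 ?_
      apply one_div_lt_one_div_of_lt (by positivity)
      linarith
    choose t htT htI using hmemIoo
    have hgn : ∀ n : ℕ, ∃ g, g ∈ G ∧ epsF v g = 1 ∧ tauF p v g = t n := by
      intro n
      have h1 := htT n
      rw [SetLike.mem_coe, hTmem] at h1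
      exact h1
    choose gg hgG hgε hgτ using hgn
    have htinj : Function.Injective t := by
      have hmono : ∀ m n : ℕ, m < n → t n < t m := by
        intro m n hmn
        have h1 : t n < 1/((n:ℝ)+1) := (htI n).2
        have h2 : 1/((m:ℝ)+2) < t m := (htI m).1
        have hc : (m:ℝ) + 1 ≤ (n:ℝ) := by
          have : (m:ℝ) < n := by exact_mod_cast hmn
          have h4 : ((m:ℝ)+1) ≤ n := by
            have : (m+1 : ℕ) ≤ n := hmn
            exact_mod_cast this
          linarith
        have h3 : 1/((n:ℝ)+1) ≤ 1/((m:ℝ)+2) := by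
          apply one_div_le_one_div_of_le (by positivity)
          linarith
        linarith
      intro m n hmn'
      rcases lt_trichotomy m n with h|h|h
      · exfalso; have h2 := hmono m n h; rw [hmn'] at h2; exact lt_irrefl _ h2
      · exact h
      · exfalso; have h2 := hmono n m h; rw [← hmn'] at h2; exact lt_irrefl _ h2
    have hginj : Function.Injective gg := by
      intro m n h
      apply htinj
      rw [← hgτ m, ← hgτ n, h]
    have hmemb : ∀ n : ℕ, gg n ∈ {g : Isom 3 | g ∈ G ∧ dist (g p) p ≤ ‖v‖} := by
      intro n
      refine ⟨hgG n, ?_⟩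
      rw [hdistτ _ (hgG n), hgτ n]
      have h1 : 0 < t n := lt_trans (by positivity) (htI n).1
      have h2 : t n < 1 := by
        refine lt_of_lt_of_le (htI n).2 ?_
        rw [div_le_one (by positivity)]
        have : (0:ℝ) ≤ n := Nat.cast_nonneg n
        linarith
      have h3 : |t n| ≤ 1 := by rw [abs_of_pos h1]; linarith
      calc |t n| * ‖v‖ ≤ 1 * ‖v‖ := mul_le_mul_of_nonneg_right h3 (norm_nonneg v)
      _ = ‖v‖ := one_mul _
    exact (Set.infinite_of_injective_forall_mem hginj hmemb) (hband ‖v‖)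
  · by_cases ha0 : a = 0
    · -- G would be finite: contradiction
      exfalso
      subst ha0
      have hτ0 : ∀ g ∈ G, epsF v g = 1 → tauF p v g = 0 := by
        intro g hg hgε
        have h1 : tauF p v g ∈ T := by rw [hTmem]; exact ⟨g, hg, hgε, rfl⟩
        rw [hTa] at h1
        obtain ⟨n, hn⟩ := AddSubgroup.mem_closure_singleton.1 h1
        rw [← hn, smul_zero]
      obtain ⟨σ₀, hσ₀⟩ : ∃ σ₀ : Isom 3, ∀ h, h ∈ G → epsF v h = 1 → tauF p v h = 0 →
          h = 1 ∨ h = σ₀ := by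
        by_cases hex : ∃ σ, (σ ∈ G ∧ epsF v σ = 1 ∧ tauF p v σ = 0) ∧ σ ≠ 1
        · obtain ⟨σ, hσP, hσ1⟩ := hex
          refine ⟨σ, fun h hhG hhε hhτ => ?_⟩
          by_cases hh1 : h = 1
          · exact Or.inl hh1
          · exact Or.inr (hNuniq h σ ⟨hhG, hhε, hhτ⟩ hσP hh1 hσ1)
        · push_neg at hex
          exact ⟨1, fun h hhG hhε hhτ => Or.inl (hex h ⟨hhG, hhε, hhτ⟩)⟩
      have hcover : ∃ S : Set (Isom 3), S.Finite ∧ (G : Set (Isom 3)) ⊆ S := by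
        by_cases hRex : ∃ g₁, g₁ ∈ G ∧ epsF v g₁ = -1
        · obtain ⟨g₁, hg₁G, hg₁ε⟩ := hRex
          refine ⟨{1, σ₀, g₁, g₁ * σ₀}, (Set.finite_singleton _).insert _ |>.insert _ |>.insert _,
            ?_⟩
          intro g hg
          obtain ⟨-, -, hεor⟩ := base hv hline hg
          rcases hεor with hε1' | hεm1
          · rcases hσ₀ g hg hε1' (hτ0 g hg hε1') with h | h
            · exact Or.inl h
            · exact Or.inr (Or.inl h)
          · have hεinv : epsF v g₁⁻¹ = -1 := by rw [eps_inv hv hline hg₁G, hg₁ε]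
            have hmemh : g₁⁻¹ * g ∈ G := mul_mem (inv_mem hg₁G) hg
            have hεh : epsF v (g₁⁻¹ * g) = 1 := by
              rw [eps_mul hv hline (inv_mem hg₁G) hg, hεinv, hεm1]
              norm_num
            rcases hσ₀ _ hmemh hεh (hτ0 _ hmemh hεh) with h | h
            · refine Or.inr (Or.inr (Or.inl ?_))
              have : g = g₁ * (g₁⁻¹ * g) := by group
              rw [this, h, mul_one]
            · refine Or.inr (Or.inr (Or.inr ?_))
              have : g = g₁ * (g₁⁻¹ * g) := by group
              rw [this, h]
              rfl
        · refine ⟨{1, σ₀}, (Set.finite_singleton _).insert _, ?_⟩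
          intro g hg
          obtain ⟨-, -, hεor⟩ := base hv hline hg
          rcases hεor with hε1' | hεm1
          · rcases hσ₀ g hg hε1' (hτ0 g hg hε1') with h | h
            · exact Or.inl h
            · exact Or.inr h
          · exact absurd ⟨g, hg, hεm1⟩ hRex
      obtain ⟨S, hSfin, hSsub⟩ := hcover
      have h1 : (G : Set (Isom 3)).Finite := hSfin.subset hSsub
      exact (Set.infinite_coe_iff.1 hGinf) h1
    · -- get the generator g₀
      obtain ⟨g₀, hg₀G, hg₀ε, hg₀τ⟩ : ∃ g, g ∈ G ∧ epsF v g = 1 ∧ tauF p v g = a := by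
        rw [← hTmem, hTa]
        exact AddSubgroup.mem_closure_singleton.2 ⟨1, one_zsmul a⟩
      have hzpow : ∀ n : ℤ, epsF v (g₀ ^ n) = 1 ∧ tauF p v (g₀ ^ n) = n * a := by
        intro n
        induction n using Int.induction_on with
        | zero => rw [zpow_zero]; exact ⟨eps_one hv, by rw [tau_one hv p]; norm_num⟩
        | succ k ih =>
          rw [zpow_add_one]
          refine ⟨by rw [eps_mul hv hline (zpow_mem hg₀G k) hg₀G, ih.1, hg₀ε, mul_one], ?_⟩
          rw [tau_mul hv hline (zpow_mem hg₀G k) hg₀G, ih.1, ih.2, hg₀τ]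
          push_cast
          ring
        | pred k ih =>
          rw [zpow_sub_one]
          have hεi : epsF v g₀⁻¹ = 1 := by rw [eps_inv hv hline hg₀G, hg₀ε]
          have hτi : tauF p v g₀⁻¹ = -a := by
            rw [tau_inv hv hline hg₀G, hg₀ε, hg₀τ, one_mul]
          refine ⟨by rw [eps_mul hv hline (zpow_mem hg₀G (-k)) (inv_mem hg₀G), ih.1, hεi,
            mul_one], ?_⟩
          rw [tau_mul hv hline (zpow_mem hg₀G (-k)) (inv_mem hg₀G), ih.1, ih.2, hτi]
          push_cast
          ring
      have hdecomp : ∀ g ∈ G, epsF v g = 1 → ∃ n : ℤ, (g₀ ^ n)⁻¹ * g ∈ G ∧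
          epsF v ((g₀ ^ n)⁻¹ * g) = 1 ∧ tauF p v ((g₀ ^ n)⁻¹ * g) = 0 ∧
          g = g₀ ^ n * ((g₀ ^ n)⁻¹ * g) := by
        intro g hg hgε
        obtain ⟨n, hn⟩ : ∃ n : ℤ, n • a = tauF p v g := by
          rw [← AddSubgroup.mem_closure_singleton, ← hTa, hTmem]
          exact ⟨g, hg, hgε, rfl⟩
        have hpmem : (g₀ ^ n)⁻¹ ∈ G := inv_mem (zpow_mem hg₀G n)
        have hεp : epsF v (g₀ ^ n)⁻¹ = 1 := by
          rw [eps_inv hv hline (zpow_mem hg₀G n), (hzpow n).1]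
        have hτp : tauF p v (g₀ ^ n)⁻¹ = -(n * a) := by
          rw [tau_inv hv hline (zpow_mem hg₀G n), (hzpow n).1, (hzpow n).2, one_mul]
        refine ⟨n, mul_mem hpmem hg, ?_, ?_, by group⟩
        · rw [eps_mul hv hline hpmem hg, hεp, hgε, mul_one]
        · rw [tau_mul hv hline hpmem hg, hτp, hεp, one_mul, ← hn, zsmul_eq_mul]
          ring
      -- the element x₀ of G
      set x₀ : ↥G := ⟨g₀, hg₀G⟩ with hx₀def
      have hx₀coe : ∀ n : ℤ, ((x₀ ^ n : ↥G) : Isom 3) = g₀ ^ n := fun n => rfl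
      set xhom : Multiplicative ℤ →* ↥G :=
        MonoidHom.mk' (fun n => x₀ ^ Multiplicative.toAdd n)
          (fun n n' => zpow_add x₀ (Multiplicative.toAdd n) (Multiplicative.toAdd n'))
        with hxhomdef
      have hxhom : ∀ n : Multiplicative ℤ, ((xhom n : ↥G) : Isom 3)
          = g₀ ^ (Multiplicative.toAdd n) := fun n => rfl
      have hg₀n1 : ∀ n : ℤ, g₀ ^ n = 1 → n = 0 := by
        intro n hn
        have h2 := (hzpow n).2
        rw [hn, tau_one hv p] at h2
        have h3 : (n:ℝ) = 0 := by
          rcases mul_eq_zero.1 h2.symm with h | h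
          · exact h
          · exact absurd h ha0
        exact_mod_cast h3
      by_cases hσex : ∃ σ, (σ ∈ G ∧ epsF v σ = 1 ∧ tauF p v σ = 0) ∧ σ ≠ 1
      · by_cases hRex : ∃ g₁, g₁ ∈ G ∧ epsF v g₁ = -1
        · -- D∞ × ℤ₂
          refine Or.inr (Or.inr (Or.inr (Or.inr ?_)))
          obtain ⟨σ, ⟨hσG, hσε, hστ⟩, hσ1⟩ := hσex
          have hσcover : ∀ h, h ∈ G → epsF v h = 1 → tauF p v h = 0 → h = 1 ∨ h = σ := by
            intro h hhG hhε hhτ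
            by_cases hh1 : h = 1
            · exact Or.inl hh1
            · exact Or.inr (hNuniq h σ ⟨hhG, hhε, hhτ⟩ ⟨hσG, hσε, hστ⟩ hh1 hσ1)
          set z₀ : ↥G := ⟨σ, hσG⟩ with hz₀def
          have hz2 : z₀ * z₀ = 1 := Subtype.ext (hNsq σ hσG hσε hστ)
          have hzsq : z₀ ^ 2 = 1 := by rw [pow_two]; exact hz2
          have hzpow2 : ∀ m : ℕ, z₀ ^ m = z₀ ^ (m % 2) := by
            intro m
            conv_lhs => rw [← Nat.div_add_mod m 2]
            rw [pow_add, pow_mul, hzsq, one_pow, one_mul]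
          set χ : Multiplicative (ZMod 2) →* ↥G :=
            MonoidHom.mk' (fun k => z₀ ^ (Multiplicative.toAdd k).val)
              (by
                intro k k'
                show z₀ ^ (Multiplicative.toAdd k + Multiplicative.toAdd k').val = _
                rw [ZMod.val_add, ← hzpow2, pow_add]) with hχdef
          have hχ1 : χ (Multiplicative.ofAdd (0 : ZMod 2)) = 1 := map_one χ
          have hχz : χ (Multiplicative.ofAdd (1 : ZMod 2)) = z₀ := by
            show z₀ ^ (1 : ZMod 2).val = z₀
            rw [show (1 : ZMod 2).val = 1 from rfl, pow_one]
          have hzcomm : ∀ u : ↥G, u * z₀ = z₀ * u := fun u =>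
            Subtype.ext (hcent σ ⟨hσG, hσε, hστ⟩ hσ1 ↑u u.2)
          have hval01 : ∀ k : Multiplicative (ZMod 2),
              (Multiplicative.toAdd k).val = 0 ∨ (Multiplicative.toAdd k).val = 1 := by
            intro k
            have := ZMod.val_lt (Multiplicative.toAdd k)
            omega
          have hχcases : ∀ k : Multiplicative (ZMod 2),
              (χ k = 1 ∧ k = 1) ∨ (χ k = z₀ ∧ (Multiplicative.toAdd k).val = 1) := by
            intro k
            rcases hval01 k with h | h
            · refine Or.inl ⟨?_, ?_⟩
              · show z₀ ^ (Multiplicative.toAdd k).val = 1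
                rw [h, pow_zero]
              · have h1 : Multiplicative.toAdd k = 0 := (ZMod.val_eq_zero _).1 h
                have h2 : k = Multiplicative.ofAdd 0 := by rw [← h1]; rfl
                rw [h2]; rfl
            · refine Or.inr ⟨?_, h⟩
              show z₀ ^ (Multiplicative.toAdd k).val = z₀
              rw [h, pow_one]
          obtain ⟨g₁, hg₁G, hg₁ε⟩ := hRex
          set y₀ : ↥G := ⟨g₁, hg₁G⟩ with hy₀def
          have hy2 : y₀ * y₀ = 1 := Subtype.ext (hsq g₁ hg₁G hg₁ε)
          have hε₁₀ : epsF v (g₁ * g₀) = -1 := by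
            rw [eps_mul hv hline hg₁G hg₀G, hg₁ε, hg₀ε, mul_one]
          have hyx2 : (y₀ * x₀) * (y₀ * x₀) = 1 :=
            Subtype.ext (hsq (g₁ * g₀) (mul_mem hg₁G hg₀G) hε₁₀)
          have hconj : y₀ * x₀ * y₀ = x₀⁻¹ := by
            have h1 : y₀ * x₀ * y₀ * x₀ = 1 := by
              have h0 : y₀ * x₀ * y₀ * x₀ = (y₀ * x₀) * (y₀ * x₀) := by group
              rw [h0, hyx2]
            calc y₀ * x₀ * y₀ = (y₀ * x₀ * y₀ * x₀) * x₀⁻¹ := by group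
            _ = x₀⁻¹ := by rw [h1, one_mul]
          have hyinv : y₀⁻¹ = y₀ := by
            rw [← mul_one y₀⁻¹, ← hy2, ← mul_assoc, inv_mul_cancel, one_mul]
          have hconjz : ∀ i : ℤ, y₀ * x₀ ^ i * y₀ = x₀ ^ (-i) := by
            intro i
            have h1 : (MulAut.conj y₀) (x₀ ^ i) = ((MulAut.conj y₀) x₀) ^ i := map_zpow _ _ _
            have h2 : (MulAut.conj y₀) x₀ = x₀⁻¹ := by
              rw [MulAut.conj_apply, hyinv]; exact hconj
            have h3 : (MulAut.conj y₀) (x₀ ^ i) = y₀ * x₀ ^ i * y₀ := by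
              rw [MulAut.conj_apply, hyinv]
            rw [h3, h2] at h1
            rw [h1, inv_zpow, zpow_neg]
          have hxy : ∀ i : ℤ, x₀ ^ i * y₀ = y₀ * x₀ ^ (-i) := by
            intro i
            calc x₀ ^ i * y₀ = y₀ * (y₀ * x₀ ^ i * y₀) := by
                  rw [← mul_assoc, ← mul_assoc, hy2, one_mul]
            _ = y₀ * x₀ ^ (-i) := by rw [hconjz]
          set fr : DihedralGroup 0 → ↥G := fun d => match d with
            | DihedralGroup.r i => x₀ ^ (show ℤ from i)
            | DihedralGroup.sr i => y₀ * x₀ ^ (show ℤ from i) with hfrdef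
          have hfrmul : ∀ d d' : DihedralGroup 0, fr (d * d') = fr d * fr d' := by
            intro d d'
            cases d with
            | r i =>
              cases d' with
              | r j =>
                rw [DihedralGroup.r_mul_r]
                show x₀ ^ ((show ℤ from i) + (show ℤ from j))
                    = x₀ ^ (show ℤ from i) * x₀ ^ (show ℤ from j)
                exact zpow_add x₀ _ _
              | sr j =>
                rw [DihedralGroup.r_mul_sr]
                show y₀ * x₀ ^ ((show ℤ from j) - (show ℤ from i))
                    = x₀ ^ (show ℤ from i) * (y₀ * x₀ ^ (show ℤ from j))
                rw [← mul_assoc, hxy, mul_assoc, ← zpow_add, neg_add_eq_sub]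
            | sr i =>
              cases d' with
              | r j =>
                rw [DihedralGroup.sr_mul_r]
                show y₀ * x₀ ^ ((show ℤ from i) + (show ℤ from j))
                    = (y₀ * x₀ ^ (show ℤ from i)) * x₀ ^ (show ℤ from j)
                rw [mul_assoc, ← zpow_add]
              | sr j =>
                rw [DihedralGroup.sr_mul_sr]
                show x₀ ^ ((show ℤ from j) - (show ℤ from i))
                    = (y₀ * x₀ ^ (show ℤ from i)) * (y₀ * x₀ ^ (show ℤ from j))
                rw [mul_assoc, ← mul_assoc (x₀ ^ (show ℤ from i)), hxy, ← mul_assoc, ← mul_assoc,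
                  hy2, one_mul, ← zpow_add, neg_add_eq_sub]
          set f : DihedralGroup 0 →* ↥G := MonoidHom.mk' fr hfrmul with hfdef
          have hfr : ∀ i : ℤ, ((f (DihedralGroup.r (show ZMod 0 from i)) : ↥G) : Isom 3)
              = g₀ ^ i := fun i => rfl
          have hfsr : ∀ i : ℤ, ((f (DihedralGroup.sr (show ZMod 0 from i)) : ↥G) : Isom 3)
              = g₁ * g₀ ^ i := fun i => rfl
          set Ψ : DihedralGroup 0 × Multiplicative (ZMod 2) →* ↥G :=
            MonoidHom.noncommCoprod f χ (fun d k => Commute.pow_right (hzcomm (f d)) _)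
            with hΨdef
          have hΨap : ∀ (d : DihedralGroup 0) (k : Multiplicative (ZMod 2)),
              Ψ (d, k) = f d * χ k := fun d k => rfl
          have hΨinj : Function.Injective Ψ := by
            rw [injective_iff_map_eq_one]
            rintro ⟨d, k⟩ hdk
            rw [hΨap] at hdk
            cases d with
            | r i =>
              rcases hχcases k with ⟨hk, hk1⟩ | ⟨hk, -⟩
              · rw [hk, mul_one] at hdk
                have h1 : g₀ ^ (show ℤ from i) = 1 := congrArg Subtype.val hdk
                have h3 : (i : ZMod 0) = 0 := hg₀n1 _ h1
                rw [hk1, h3, ← DihedralGroup.one_def]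
                rfl
              · exfalso
                rw [hk] at hdk
                have h1 : g₀ ^ (show ℤ from i) * σ = 1 := congrArg Subtype.val hdk
                have hτσ2 : tauF p v (g₀ ^ (show ℤ from i) * σ) = (show ℤ from i) * a := by
                  rw [tau_mul hv hline (zpow_mem hg₀G _) hσG, (hzpow _).1, (hzpow _).2, hστ,
                    one_mul, add_zero]
                rw [h1, tau_one hv p] at hτσ2
                have h3 : (show ℤ from i) = 0 := by
                  rcases mul_eq_zero.1 hτσ2.symm with h | h
                  · exact_mod_cast h
                  · exact absurd h ha0
                rw [h3, zpow_zero, one_mul] at h1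
                exact hσ1 h1
            | sr i =>
              exfalso
              rcases hχcases k with ⟨hk, -⟩ | ⟨hk, -⟩ <;> rw [hk] at hdk
              · rw [mul_one] at hdk
                have h1 : g₁ * g₀ ^ (show ℤ from i) = 1 := congrArg Subtype.val hdk
                have h2 : epsF v (g₁ * g₀ ^ (show ℤ from i)) = -1 := by
                  rw [eps_mul hv hline hg₁G (zpow_mem hg₀G _), hg₁ε, (hzpow _).1, mul_one]
                rw [h1, eps_one hv] at h2
                norm_num at h2
              · have h1 : g₁ * g₀ ^ (show ℤ from i) * σ = 1 := congrArg Subtype.val hdk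
                have h2 : epsF v (g₁ * g₀ ^ (show ℤ from i) * σ) = -1 := by
                  rw [eps_mul hv hline (mul_mem hg₁G (zpow_mem hg₀G _)) hσG,
                    eps_mul hv hline hg₁G (zpow_mem hg₀G _), hg₁ε, (hzpow _).1, hσε]
                  norm_num
                rw [h1, eps_one hv] at h2
                norm_num at h2
          have hΨsurj : Function.Surjective Ψ := by
            intro u
            obtain ⟨-, -, hεor⟩ := base hv hline u.2
            rcases hεor with hε1' | hεm1
            · obtain ⟨n, hmemh, hεh, hτh, hdec⟩ := hdecomp (↑u) u.2 hε1'
              rcases hσcover _ hmemh hεh hτh with h1 | h1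
              · refine ⟨(DihedralGroup.r (show ZMod 0 from n), Multiplicative.ofAdd (0 : ZMod 2)),
                  ?_⟩
                rw [hΨap, hχ1, mul_one]
                apply Subtype.ext
                rw [hfr]
                show g₀ ^ n = (↑u : Isom 3)
                rw [hdec, h1, mul_one]
              · refine ⟨(DihedralGroup.r (show ZMod 0 from n), Multiplicative.ofAdd (1 : ZMod 2)),
                  ?_⟩
                rw [hΨap, hχz]
                apply Subtype.ext
                show g₀ ^ n * σ = (↑u : Isom 3)
                rw [hdec, h1]
            · have hmem' : g₁⁻¹ * ↑u ∈ G := mul_mem (inv_mem hg₁G) u.2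
              have hε' : epsF v (g₁⁻¹ * ↑u) = 1 := by
                rw [eps_mul hv hline (inv_mem hg₁G) u.2, eps_inv hv hline hg₁G, hg₁ε, hεm1]
                norm_num
              obtain ⟨n, hmemh, hεh, hτh, hdec⟩ := hdecomp _ hmem' hε'
              have hu : (↑u : Isom 3) = g₁ * (g₀ ^ n * ((g₀ ^ n)⁻¹ * (g₁⁻¹ * ↑u))) := by
                rw [← hdec, ← mul_assoc, mul_inv_cancel, one_mul]
              rcases hσcover _ hmemh hεh hτh with h1 | h1
              · refine ⟨(DihedralGroup.sr (show ZMod 0 from n), Multiplicative.ofAdd (0 : ZMod 2)),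
                  ?_⟩
                rw [hΨap, hχ1, mul_one]
                apply Subtype.ext
                rw [hfsr]
                show g₁ * g₀ ^ n = (↑u : Isom 3)
                rw [hu, h1, mul_one]
              · refine ⟨(DihedralGroup.sr (show ZMod 0 from n), Multiplicative.ofAdd (1 : ZMod 2)),
                  ?_⟩
                rw [hΨap, hχz]
                apply Subtype.ext
                show g₁ * g₀ ^ n * σ = (↑u : Isom 3)
                rw [hu, h1, mul_assoc]
          exact ⟨(MulEquiv.ofBijective Ψ ⟨hΨinj, hΨsurj⟩).symm⟩
        · -- ℤ × ℤ₂
          refine Or.inr (Or.inr (Or.inr (Or.inl ?_)))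
          obtain ⟨σ, ⟨hσG, hσε, hστ⟩, hσ1⟩ := hσex
          have hσcover : ∀ h, h ∈ G → epsF v h = 1 → tauF p v h = 0 → h = 1 ∨ h = σ := by
            intro h hhG hhε hhτ
            by_cases hh1 : h = 1
            · exact Or.inl hh1
            · exact Or.inr (hNuniq h σ ⟨hhG, hhε, hhτ⟩ ⟨hσG, hσε, hστ⟩ hh1 hσ1)
          set z₀ : ↥G := ⟨σ, hσG⟩ with hz₀def
          have hz2 : z₀ * z₀ = 1 := Subtype.ext (hNsq σ hσG hσε hστ)
          have hzsq : z₀ ^ 2 = 1 := by rw [pow_two]; exact hz2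
          have hzpow2 : ∀ m : ℕ, z₀ ^ m = z₀ ^ (m % 2) := by
            intro m
            conv_lhs => rw [← Nat.div_add_mod m 2]
            rw [pow_add, pow_mul, hzsq, one_pow, one_mul]
          set χ : Multiplicative (ZMod 2) →* ↥G :=
            MonoidHom.mk' (fun k => z₀ ^ (Multiplicative.toAdd k).val)
              (by
                intro k k'
                show z₀ ^ (Multiplicative.toAdd k + Multiplicative.toAdd k').val = _
                rw [ZMod.val_add, ← hzpow2, pow_add]) with hχdef
          have hχ1 : χ (Multiplicative.ofAdd (0 : ZMod 2)) = 1 := map_one χ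
          have hχz : χ (Multiplicative.ofAdd (1 : ZMod 2)) = z₀ := by
            show z₀ ^ (1 : ZMod 2).val = z₀
            rw [show (1 : ZMod 2).val = 1 from rfl, pow_one]
          have hzcomm : ∀ u : ↥G, u * z₀ = z₀ * u := fun u =>
            Subtype.ext (hcent σ ⟨hσG, hσε, hστ⟩ hσ1 ↑u u.2)
          have hval01 : ∀ k : Multiplicative (ZMod 2),
              (Multiplicative.toAdd k).val = 0 ∨ (Multiplicative.toAdd k).val = 1 := by
            intro k
            have := ZMod.val_lt (Multiplicative.toAdd k)
            omega
          have hχcases : ∀ k : Multiplicative (ZMod 2),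
              (χ k = 1 ∧ k = 1) ∨ (χ k = z₀ ∧ (Multiplicative.toAdd k).val = 1) := by
            intro k
            rcases hval01 k with h | h
            · refine Or.inl ⟨?_, ?_⟩
              · show z₀ ^ (Multiplicative.toAdd k).val = 1
                rw [h, pow_zero]
              · have h1 : Multiplicative.toAdd k = 0 := (ZMod.val_eq_zero _).1 h
                have h2 : k = Multiplicative.ofAdd 0 := by rw [← h1]; rfl
                rw [h2]; rfl
            · refine Or.inr ⟨?_, h⟩
              show z₀ ^ (Multiplicative.toAdd k).val = z₀
              rw [h, pow_one]
          set Ψ : Multiplicative ℤ × Multiplicative (ZMod 2) →* ↥G :=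
            MonoidHom.noncommCoprod xhom χ (fun m k => Commute.pow_right (hzcomm (xhom m)) _)
            with hΨdef
          have hΨap : ∀ (m : Multiplicative ℤ) (k : Multiplicative (ZMod 2)),
              Ψ (m, k) = xhom m * χ k := fun m k => rfl
          have hΨinj : Function.Injective Ψ := by
            rw [injective_iff_map_eq_one]
            rintro ⟨m, k⟩ hmk
            rw [hΨap] at hmk
            rcases hχcases k with ⟨hk, hk1⟩ | ⟨hk, -⟩
            · rw [hk, mul_one] at hmk
              have h1 : g₀ ^ (Multiplicative.toAdd m) = 1 := congrArg Subtype.val hmk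
              have h3 := hg₀n1 _ h1
              have h4 : m = 1 := by
                have h5 : m = Multiplicative.ofAdd 0 := by rw [← h3]; rfl
                rw [h5]; rfl
              rw [h4, hk1]; rfl
            · exfalso
              rw [hk] at hmk
              have h1 : g₀ ^ (Multiplicative.toAdd m) * σ = 1 := congrArg Subtype.val hmk
              have hτσ2 : tauF p v (g₀ ^ (Multiplicative.toAdd m) * σ)
                  = (Multiplicative.toAdd m) * a := by
                rw [tau_mul hv hline (zpow_mem hg₀G _) hσG, (hzpow _).1, (hzpow _).2, hστ,
                  one_mul, add_zero]
              rw [h1, tau_one hv p] at hτσ2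
              have h3 : (Multiplicative.toAdd m) = (0 : ℤ) := by
                rcases mul_eq_zero.1 hτσ2.symm with h | h
                · exact_mod_cast h
                · exact absurd h ha0
              rw [h3, zpow_zero, one_mul] at h1
              exact hσ1 h1
          have hΨsurj : Function.Surjective Ψ := by
            intro u
            obtain ⟨-, -, hεor⟩ := base hv hline u.2
            rcases hεor with hε1' | hεm1
            · obtain ⟨n, hmemh, hεh, hτh, hdec⟩ := hdecomp (↑u) u.2 hε1'
              rcases hσcover _ hmemh hεh hτh with h1 | h1
              · refine ⟨(Multiplicative.ofAdd n, Multiplicative.ofAdd (0 : ZMod 2)), ?_⟩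
                rw [hΨap, hχ1, mul_one]
                apply Subtype.ext
                rw [hxhom]
                show g₀ ^ n = (↑u : Isom 3)
                rw [hdec, h1, mul_one]
              · refine ⟨(Multiplicative.ofAdd n, Multiplicative.ofAdd (1 : ZMod 2)), ?_⟩
                rw [hΨap, hχz]
                apply Subtype.ext
                show g₀ ^ n * σ = (↑u : Isom 3)
                rw [hdec, h1]
            · exact absurd ⟨↑u, u.2, hεm1⟩ hRex
          exact ⟨(MulEquiv.ofBijective Ψ ⟨hΨinj, hΨsurj⟩).symm⟩
      · by_cases hRex : ∃ g₁, g₁ ∈ G ∧ epsF v g₁ = -1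
        · -- D∞
          refine Or.inr (Or.inr (Or.inl ?_))
          have hσall : ∀ h, h ∈ G → epsF v h = 1 → tauF p v h = 0 → h = 1 := by
            intro h hhG hhε hhτ
            by_contra hh1
            exact hσex ⟨h, ⟨hhG, hhε, hhτ⟩, hh1⟩
          obtain ⟨g₁, hg₁G, hg₁ε⟩ := hRex
          set y₀ : ↥G := ⟨g₁, hg₁G⟩ with hy₀def
          have hy2 : y₀ * y₀ = 1 := Subtype.ext (hsq g₁ hg₁G hg₁ε)
          have hε₁₀ : epsF v (g₁ * g₀) = -1 := by
            rw [eps_mul hv hline hg₁G hg₀G, hg₁ε, hg₀ε, mul_one]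
          have hyx2 : (y₀ * x₀) * (y₀ * x₀) = 1 :=
            Subtype.ext (hsq (g₁ * g₀) (mul_mem hg₁G hg₀G) hε₁₀)
          have hconj : y₀ * x₀ * y₀ = x₀⁻¹ := by
            have h1 : y₀ * x₀ * y₀ * x₀ = 1 := by
              have h0 : y₀ * x₀ * y₀ * x₀ = (y₀ * x₀) * (y₀ * x₀) := by group
              rw [h0, hyx2]
            calc y₀ * x₀ * y₀ = (y₀ * x₀ * y₀ * x₀) * x₀⁻¹ := by group
            _ = x₀⁻¹ := by rw [h1, one_mul]
          have hyinv : y₀⁻¹ = y₀ := by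
            rw [← mul_one y₀⁻¹, ← hy2, ← mul_assoc, inv_mul_cancel, one_mul]
          have hconjz : ∀ i : ℤ, y₀ * x₀ ^ i * y₀ = x₀ ^ (-i) := by
            intro i
            have h1 : (MulAut.conj y₀) (x₀ ^ i) = ((MulAut.conj y₀) x₀) ^ i := map_zpow _ _ _
            have h2 : (MulAut.conj y₀) x₀ = x₀⁻¹ := by
              rw [MulAut.conj_apply, hyinv]; exact hconj
            have h3 : (MulAut.conj y₀) (x₀ ^ i) = y₀ * x₀ ^ i * y₀ := by
              rw [MulAut.conj_apply, hyinv]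
            rw [h3, h2] at h1
            rw [h1, inv_zpow, zpow_neg]
          have hxy : ∀ i : ℤ, x₀ ^ i * y₀ = y₀ * x₀ ^ (-i) := by
            intro i
            calc x₀ ^ i * y₀ = y₀ * (y₀ * x₀ ^ i * y₀) := by
                  rw [← mul_assoc, ← mul_assoc, hy2, one_mul]
            _ = y₀ * x₀ ^ (-i) := by rw [hconjz]
          set fr : DihedralGroup 0 → ↥G := fun d => match d with
            | DihedralGroup.r i => x₀ ^ (show ℤ from i)
            | DihedralGroup.sr i => y₀ * x₀ ^ (show ℤ from i) with hfrdef
          have hfrmul : ∀ d d' : DihedralGroup 0, fr (d * d') = fr d * fr d' := by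
            intro d d'
            cases d with
            | r i =>
              cases d' with
              | r j =>
                rw [DihedralGroup.r_mul_r]
                show x₀ ^ ((show ℤ from i) + (show ℤ from j))
                    = x₀ ^ (show ℤ from i) * x₀ ^ (show ℤ from j)
                exact zpow_add x₀ _ _
              | sr j =>
                rw [DihedralGroup.r_mul_sr]
                show y₀ * x₀ ^ ((show ℤ from j) - (show ℤ from i))
                    = x₀ ^ (show ℤ from i) * (y₀ * x₀ ^ (show ℤ from j))
                rw [← mul_assoc, hxy, mul_assoc, ← zpow_add, neg_add_eq_sub]
            | sr i =>
              cases d' with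
              | r j =>
                rw [DihedralGroup.sr_mul_r]
                show y₀ * x₀ ^ ((show ℤ from i) + (show ℤ from j))
                    = (y₀ * x₀ ^ (show ℤ from i)) * x₀ ^ (show ℤ from j)
                rw [mul_assoc, ← zpow_add]
              | sr j =>
                rw [DihedralGroup.sr_mul_sr]
                show x₀ ^ ((show ℤ from j) - (show ℤ from i))
                    = (y₀ * x₀ ^ (show ℤ from i)) * (y₀ * x₀ ^ (show ℤ from j))
                rw [mul_assoc, ← mul_assoc (x₀ ^ (show ℤ from i)), hxy, ← mul_assoc, ← mul_assoc,
                  hy2, one_mul, ← zpow_add, neg_add_eq_sub]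
          set f : DihedralGroup 0 →* ↥G := MonoidHom.mk' fr hfrmul with hfdef
          have hfr : ∀ i : ℤ, ((f (DihedralGroup.r (show ZMod 0 from i)) : ↥G) : Isom 3)
              = g₀ ^ i := fun i => rfl
          have hfsr : ∀ i : ℤ, ((f (DihedralGroup.sr (show ZMod 0 from i)) : ↥G) : Isom 3)
              = g₁ * g₀ ^ i := fun i => rfl
          have hfinj : Function.Injective f := by
            rw [injective_iff_map_eq_one]
            intro d hd
            cases d with
            | r i =>
              have h1 : g₀ ^ (show ℤ from i) = 1 := congrArg Subtype.val hd
              have h2 := hg₀n1 _ h1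
              have h3 : (i : ZMod 0) = 0 := h2
              rw [h3, ← DihedralGroup.one_def]
            | sr i =>
              exfalso
              have h1 : g₁ * g₀ ^ (show ℤ from i) = 1 := congrArg Subtype.val hd
              have h2 : epsF v (g₁ * g₀ ^ (show ℤ from i)) = -1 := by
                rw [eps_mul hv hline hg₁G (zpow_mem hg₀G _), hg₁ε, (hzpow _).1, mul_one]
              rw [h1, eps_one hv] at h2
              norm_num at h2
          have hfsurj : Function.Surjective f := by
            intro u
            obtain ⟨-, -, hεor⟩ := base hv hline u.2
            rcases hεor with hε1' | hεm1
            · obtain ⟨n, hmemh, hεh, hτh, hdec⟩ := hdecomp (↑u) u.2 hε1'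
              have h1 : (g₀ ^ n)⁻¹ * ↑u = 1 := hσall _ hmemh hεh hτh
              refine ⟨DihedralGroup.r (show ZMod 0 from n), ?_⟩
              apply Subtype.ext
              rw [hfr]
              show g₀ ^ n = (↑u : Isom 3)
              rw [hdec, h1, mul_one]
            · have hmem' : g₁⁻¹ * ↑u ∈ G := mul_mem (inv_mem hg₁G) u.2
              have hε' : epsF v (g₁⁻¹ * ↑u) = 1 := by
                rw [eps_mul hv hline (inv_mem hg₁G) u.2, eps_inv hv hline hg₁G, hg₁ε, hεm1]
                norm_num
              obtain ⟨n, hmemh, hεh, hτh, hdec⟩ := hdecomp _ hmem' hε'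
              have h1 : (g₀ ^ n)⁻¹ * (g₁⁻¹ * ↑u) = 1 := hσall _ hmemh hεh hτh
              refine ⟨DihedralGroup.sr (show ZMod 0 from n), ?_⟩
              apply Subtype.ext
              rw [hfsr]
              show g₁ * g₀ ^ n = (↑u : Isom 3)
              have h2 : g₁⁻¹ * ↑u = g₀ ^ n := by rw [hdec, h1, mul_one]
              rw [← h2, ← mul_assoc, mul_inv_cancel, one_mul]
          exact ⟨(MulEquiv.ofBijective f ⟨hfinj, hfsurj⟩).symm⟩
        · -- ℤ
          refine Or.inr (Or.inl ⟨?_⟩)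
          have hσall : ∀ h, h ∈ G → epsF v h = 1 → tauF p v h = 0 → h = 1 := by
            intro h hhG hhε hhτ
            by_contra hh1
            exact hσex ⟨h, ⟨hhG, hhε, hhτ⟩, hh1⟩
          have hbij : Function.Bijective xhom := by
            constructor
            · rw [injective_iff_map_eq_one]
              intro n hn
              have h1 : g₀ ^ (Multiplicative.toAdd n) = 1 := by
                rw [← hxhom n, hn]; rfl
              have h3 := hg₀n1 _ h1
              have : n = Multiplicative.ofAdd 0 := by rw [← h3]; rfl
              rw [this]; rfl
            · intro u
              obtain ⟨-, -, hεor⟩ := base hv hline u.2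
              rcases hεor with hε1' | hεm1
              · obtain ⟨n, hmemh, hεh, hτh, hdec⟩ := hdecomp (↑u) u.2 hε1'
                have h1 : (g₀ ^ n)⁻¹ * ↑u = 1 := hσall _ hmemh hεh hτh
                refine ⟨Multiplicative.ofAdd n, ?_⟩
                apply Subtype.ext
                rw [hxhom]
                show g₀ ^ n = (↑u : Isom 3)
                rw [hdec, h1, mul_one]
              · exact absurd ⟨↑u, u.2, hεm1⟩ hRex
          exact (MulEquiv.ofBijective xhom hbij).symm

/-- Lemma 4.1. Let `Γ` be a 3-crystallographic group and `G ≤ Γ` a virtually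
infinite cyclic subgroup leaving invariant two different lines in `ℝ³`.  Then `G` is trivial or
isomorphic to `ℤ`, `D_∞`, `ℤ × ℤ₂` or `D_∞ × ℤ₂`.  (`DihedralGroup 0` is the infinite
dihedral group `ℤ₂ * ℤ₂`.) -/
theorem two_invariant_lines_classification
    (Γ G : Subgroup (Isom 3)) (hΓ : IsCrystallographic Γ) (hGΓ : G ≤ Γ)
    (hvc : IsVirtuallyInfiniteCyclic G)
    (l₁ l₂ : Set (E 3)) (hl₁ : IsLine l₁) (hl₂ : IsLine l₂) (hne : l₁ ≠ l₂)
    (hinv₁ : ∀ g ∈ G, g '' l₁ = l₁) (hinv₂ : ∀ g ∈ G, g '' l₂ = l₂) :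
    G = ⊥ ∨
    Nonempty (G ≃* Multiplicative ℤ) ∨
    Nonempty (G ≃* DihedralGroup 0) ∨
    Nonempty (G ≃* (Multiplicative ℤ × Multiplicative (ZMod 2))) ∨
    Nonempty (G ≃* (DihedralGroup 0 × Multiplicative (ZMod 2))) := by
  exact two_invariant_lines_classification' Γ G hΓ hGΓ hvc l₁ l₂ hl₁ hl₂ hne hinv₁ hinv₂
end
end

section
/- Let Γ be a 3-crystallographic group, let l be a line in ℝ³, and let Γ^{(l)} = {γ ∈ Γ : γl = l} be its setwise stabilizer. Suppose Γ^{(l)} is virtually infinite cyclic and l is the only line in ℝ³ left invariant by Γ^{(l)}. Then Γ^{(l)} is a maximal virtually infinite cyclic subgroup of Γ: if Γ^{(l)} ≤ G ≤ Γ with G virtually infinite cyclic, then G = Γ^{(l)}. -/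
noncomputable section

/- ### Auxiliary material -/

open RealInnerProductSpace

namespace CrystAux

/-- The linear part of an isometry of `ℝ³` (via Mazur–Ulam). -/
abbrev lin (f : Isom 3) : E 3 ≃ₗᵢ[ℝ] E 3 := f.toRealLinearIsometryEquiv

lemma lin_apply (f : Isom 3) (x : E 3) : lin f x = f x - f 0 :=
  IsometryEquiv.toRealLinearIsometryEquiv_apply f x

lemma isom_affine (f : Isom 3) (x : E 3) : f x = lin f x + f 0 := by
  rw [lin_apply]; abel

lemma isom_add (f : Isom 3) (x z : E 3) : f (x + z) = f x + lin f z := by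
  rw [isom_affine f (x + z), isom_affine f x, map_add]; abel

/-- Real inner product with a fixed vector, as a linear map. -/
def innerL (v : E 3) : E 3 →ₗ[ℝ] ℝ where
  toFun x := ⟪x, v⟫
  map_add' x y := inner_add_left x y v
  map_smul' r x := by simpa using real_inner_smul_left x v r

/-- Orthogonal projection onto the hyperplane `v^⊥` (as a linear map). -/
def perp (v : E 3) : E 3 →ₗ[ℝ] E 3 :=
  LinearMap.id - (innerL v).smulRight ((⟪v, v⟫)⁻¹ • v)

lemma perp_apply (v x : E 3) : perp v x = x - ⟪x, v⟫ • ((⟪v, v⟫)⁻¹ • v) := rfl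

lemma perp_add_smul (v : E 3) (hv : v ≠ 0) (x : E 3) (t : ℝ) :
    perp v (x + t • v) = perp v x := by
  have hQ : ⟪v, v⟫ ≠ 0 := inner_self_ne_zero.mpr hv
  have hscal : ∀ q r Q : ℝ, Q ≠ 0 → (q + r * Q) * Q⁻¹ = q * Q⁻¹ + r := by
    intro q r Q hQ'; field_simp
  simp only [perp_apply, inner_add_left, real_inner_smul_left, smul_smul]
  rw [hscal _ _ _ hQ, add_smul]
  abel

lemma perp_orthogonal (v x : E 3) (h : ⟪x, v⟫ = 0) : perp v x = x := by
  simp [perp_apply, h]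

lemma exists_perp_add (v x : E 3) : ∃ t : ℝ, x = perp v x + t • v := by
  refine ⟨⟪x, v⟫ * (⟪v, v⟫)⁻¹, ?_⟩
  simp [perp_apply, smul_smul]

lemma perp_idem (v : E 3) (hv : v ≠ 0) (x : E 3) : perp v (perp v x) = perp v x := by
  obtain ⟨t, ht⟩ := exists_perp_add v x
  have h2 : perp v x = x - t • v := eq_sub_of_add_eq ht.symm
  rw [h2, sub_eq_add_neg, ← neg_smul, perp_add_smul v hv, neg_smul, ← sub_eq_add_neg]
  exact h2

end CrystAux

open CrystAux
set_option maxHeartbeats 1600000 in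
/-- Lemma 5.1. Let `Γ` be a 3-crystallographic group, `l` a line in `ℝ³`
and `Γ^{(l)}` its setwise stabilizer in `Γ`.  If `Γ^{(l)}` is virtually infinite cyclic and
`l` is the only line left invariant by `Γ^{(l)}`, then `Γ^{(l)}` is a maximal virtually
infinite cyclic subgroup of `Γ`. -/
theorem stabilizer_maximal_virtually_infinite_cyclic
    (Γ : Subgroup (Isom 3)) (hΓ : IsCrystallographic Γ)
    (l : Set (E 3)) (hl : IsLine l)
    (Γl : Subgroup (Isom 3))
    (hΓl : (Γl : Set (Isom 3)) = {γ : Isom 3 | γ ∈ Γ ∧ γ '' l = l})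
    (hvc : IsVirtuallyInfiniteCyclic Γl)
    (huniq : ∀ l' : Set (E 3), IsLine l' → (∀ γ ∈ Γl, γ '' l' = l') → l' = l)
    (G : Subgroup (Isom 3)) (hΓlG : Γl ≤ G) (hGΓ : G ≤ Γ)
    (hGvc : IsVirtuallyInfiniteCyclic G) :
    G = Γl := by
  classical
  obtain ⟨H, hHfi, ⟨φ⟩⟩ := hGvc
  haveI := hHfi
  -- the generator
  set gH : H := φ.symm (Multiplicative.ofAdd 1) with hgH
  set g₀ : ↥G := (gH : ↥G) with hg₀
  set g : Isom 3 := (g₀ : Isom 3) with hg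
  have hgG : g ∈ G := g₀.2
  have hgHpow : ∀ n : ℤ, H.subtype (gH ^ n) = g₀ ^ n := by
    intro n; rw [map_zpow]; rfl
  have hHzpow : ∀ h : ↥G, h ∈ H → ∃ n : ℤ, h = g₀ ^ n := by
    intro h hh
    refine ⟨Multiplicative.toAdd (φ ⟨h, hh⟩), ?_⟩
    have h1 : (⟨h, hh⟩ : H) = gH ^ (Multiplicative.toAdd (φ ⟨h, hh⟩)) := by
      apply φ.injective
      rw [map_zpow, hgH, φ.apply_symm_apply]
      rw [← ofAdd_zsmul, smul_eq_mul, mul_one, ofAdd_toAdd]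
    have h2 := congrArg H.subtype h1
    rw [hgHpow] at h2
    exact h2
  have hcoe_zpow : ∀ n : ℤ, G.subtype (g₀ ^ n) = g ^ n := by
    intro n; rw [map_zpow]; rfl
  -- powers of g are pairwise distinct
  have hinj : Function.Injective (fun n : ℤ => g ^ n) := by
    intro n m hnm
    simp only at hnm
    have h1 : (g₀ ^ n : ↥G) = g₀ ^ m :=
      G.subtype_injective (by rw [hcoe_zpow, hcoe_zpow]; exact hnm)
    have h2 : (gH ^ n : H) = gH ^ m :=
      H.subtype_injective (by rw [hgHpow, hgHpow]; exact h1)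
    have h3 := congrArg φ h2
    rw [map_zpow, map_zpow, hgH, φ.apply_symm_apply, ← ofAdd_zsmul, ← ofAdd_zsmul] at h3
    simpa using h3
  -- the linear part of g and its fixed space
  set A : E 3 ≃ₗᵢ[ℝ] E 3 := lin g with hA
  set Amap : E 3 →ₗ[ℝ] E 3 := (A.toLinearEquiv : E 3 →ₗ[ℝ] E 3) with hAmap
  have hAmap' : ∀ x : E 3, Amap x = A x := fun _ => rfl
  set V₁ : Submodule ℝ (E 3) := LinearMap.ker (Amap - LinearMap.id) with hV₁
  have hV₁mem : ∀ x : E 3, x ∈ V₁ ↔ A x = x := by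
    intro x
    rw [hV₁, LinearMap.mem_ker, LinearMap.sub_apply, LinearMap.id_apply, sub_eq_zero, hAmap']
  set b : E 3 := g 0 with hb
  set b₁ : E 3 := (Submodule.orthogonalProjection V₁ b : E 3) with hb₁
  have hb₁V : b₁ ∈ V₁ := (Submodule.orthogonalProjection V₁ b).2
  have hAb₁ : A b₁ = b₁ := (hV₁mem b₁).mp hb₁V
  have hb₂ : b - b₁ ∈ V₁ᗮ := Submodule.sub_starProjection_mem_orthogonal (K := V₁) b
  -- surjectivity of (1 - A) on V₁ᗮ
  have hmaps : ∀ x ∈ V₁ᗮ, x - A x ∈ V₁ᗮ := by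
    intro x hx
    rw [Submodule.mem_orthogonal] at hx ⊢
    intro u hu
    have hAu : A u = u := (hV₁mem u).mp hu
    have : ⟪u, A x⟫ = ⟪u, x⟫ := by
      conv_lhs => rw [← hAu]
      exact A.inner_map_map u x
    rw [inner_sub_right, this, hx u hu, sub_zero]
  have hsurj : ∀ y ∈ V₁ᗮ, ∃ w ∈ V₁ᗮ, w - A w = y := by
    set Dmap : E 3 →ₗ[ℝ] E 3 := LinearMap.id - Amap with hDmap
    have hDmap' : ∀ x : E 3, Dmap x = x - A x := by
      intro x
      rw [hDmap, LinearMap.sub_apply, LinearMap.id_apply, hAmap']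
    have hmaps' : ∀ x ∈ V₁ᗮ, Dmap x ∈ V₁ᗮ := by
      intro x hx
      rw [hDmap']
      exact hmaps x hx
    set T : ↥V₁ᗮ →ₗ[ℝ] ↥V₁ᗮ := Dmap.restrict hmaps' with hT
    have hTinj : Function.Injective T := by
      intro x y hxy
      have h1 : (x : E 3) - A x = (y : E 3) - A y := by
        have h0 := congrArg (fun z : ↥V₁ᗮ => (z : E 3)) hxy
        simp only [hT, LinearMap.restrict_apply] at h0
        rw [← hDmap' (x : E 3), ← hDmap' (y : E 3)]
        exact_mod_cast h0
      have h2 : A ((x : E 3) - y) = (x : E 3) - y := by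
        have := sub_eq_sub_iff_sub_eq_sub.mp h1
        rw [map_sub]
        linear_combination (norm := module) -this
      have hmemV : ((x : E 3) - y) ∈ V₁ := (hV₁mem _).mpr h2
      have hmemO : ((x : E 3) - y) ∈ V₁ᗮ := sub_mem x.2 y.2
      have : ((x : E 3) - y) = 0 := by
        have h0 := (Submodule.mem_orthogonal V₁ _).mp hmemO _ hmemV
        exact inner_self_eq_zero.mp h0
      exact Subtype.coe_injective (by linear_combination (norm := module) this)
    have hTsurj : Function.Surjective T := LinearMap.injective_iff_surjective.mp hTinj
    intro y hy
    obtain ⟨w, hw⟩ := hTsurj ⟨y, hy⟩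
    refine ⟨(w : E 3), w.2, ?_⟩
    have h0 := congrArg (fun z : ↥V₁ᗮ => (z : E 3)) hw
    simp only [hT, LinearMap.restrict_apply] at h0
    rw [← hDmap' (w : E 3)]
    exact_mod_cast h0
  -- the axis point
  obtain ⟨p, hpO, hpA⟩ := hsurj (b - b₁) hb₂
  have hpb₁ : ⟪p, b₁⟫ = 0 := by
    rw [real_inner_comm]
    exact (Submodule.mem_orthogonal V₁ p).mp hpO b₁ hb₁V
  have hgp : g p = p + b₁ := by
    rw [isom_affine g p, ← hA, ← hb]
    have : A p = p - (b - b₁) := by linear_combination (norm := module) -hpA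
    rw [this]; abel
  have hgstep : ∀ t : ℝ, g (p + t • b₁) = p + (t + 1) • b₁ := by
    intro t
    rw [isom_add, ← hA, map_smul, hAb₁, hgp]
    module
  have hgstep' : ∀ t : ℝ, g⁻¹ (p + t • b₁) = p + (t - 1) • b₁ := by
    intro t
    apply g.injective
    have : (g : Isom 3) (g⁻¹ (p + t • b₁)) = p + t • b₁ := by
      have : (g * g⁻¹) (p + t • b₁) = p + t • b₁ := by rw [mul_inv_cancel]; rfl
      exact this
    rw [this, hgstep (t - 1)]
    ring_nf
  have axis : ∀ n : ℤ, (g ^ n) p = p + (n : ℝ) • b₁ := by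
    intro n
    induction n using Int.induction_on with
    | zero => simp
    | succ k ih =>
      have h1 : (g ^ ((k : ℤ) + 1)) = g * g ^ (k : ℤ) := by
        rw [← zpow_one_add]; ring_nf
      rw [h1]
      have : (g * g ^ (k : ℤ)) p = g ((g ^ (k : ℤ)) p) := rfl
      rw [this, ih, hgstep]
      push_cast; ring_nf
    | pred k ih =>
      have h1 : (g ^ (-(k : ℤ) - 1)) = g⁻¹ * g ^ (-(k : ℤ)) := by
        rw [← zpow_neg_one, ← zpow_add]; ring_nf
      rw [h1]
      have : (g⁻¹ * g ^ (-(k : ℤ))) p = g⁻¹ ((g ^ (-(k : ℤ))) p) := rfl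
      rw [this, ih, hgstep']
      push_cast; ring_nf
  -- b₁ ≠ 0 by proper discontinuity
  have hb₁ne : b₁ ≠ 0 := by
    intro h0
    have hfix : ∀ n : ℤ, (g ^ n) p = p := by
      intro n; rw [axis n, h0, smul_zero, add_zero]
    have hfin := hΓ.1 {p} {p} isCompact_singleton isCompact_singleton
    have hsub : Set.range (fun n : ℤ => g ^ n) ⊆
        {γ : Isom 3 | γ ∈ Γ ∧ (γ '' {p} ∩ {p}).Nonempty} := by
      rintro _ ⟨n, rfl⟩
      refine ⟨zpow_mem (hGΓ hgG) n, ⟨p, ?_⟩⟩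
      constructor
      · exact ⟨p, rfl, hfix n⟩
      · rfl
    exact ((Set.infinite_range_of_injective hinj).mono hsub) hfin
  -- every element of G maps b₁ to a nonzero multiple of itself
  have hs : ∀ γh : ↥G, ∃ s : ℝ, s ≠ 0 ∧ lin (γh : Isom 3) b₁ = s • b₁ := by
    intro γh
    set γ : Isom 3 := (γh : Isom 3) with hγ
    -- find a relation γ g^a γ⁻¹ = g^c
    haveI hGinf : Infinite ↥G := by
      haveI : Infinite H := Infinite.of_injective φ.symm φ.symm.injective
      exact Infinite.of_injective (fun h : ↥H => (h : ↥G)) Subtype.coe_injective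
    set K : Subgroup ↥G := H ⊓ Subgroup.comap (MulAut.conj γh).toMonoidHom H with hK
    have hKind : K.index ≠ 0 := by
      apply Subgroup.index_inf_ne_zero hHfi.index_ne_zero
      rw [Subgroup.index_comap_of_surjective H (MulAut.conj γh).surjective]
      exact hHfi.index_ne_zero
    haveI : K.FiniteIndex := ⟨hKind⟩
    obtain ⟨k, hk, hk1⟩ : ∃ k ∈ K, k ≠ 1 := by
      rcases K.bot_or_exists_ne_one with hbot | h
      · exfalso
        haveI : Finite ↥K := by rw [hbot]; exact inferInstance
        haveI : Finite ↥G :=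
          Finite.of_equiv _ (Subgroup.groupEquivQuotientProdSubgroup (s := K)).symm
        exact not_finite ↥G
      · exact h
    obtain ⟨a, hka⟩ := hHzpow k hk.1
    obtain ⟨c, hkc⟩ := hHzpow _ hk.2
    have ha0 : a ≠ 0 := by
      rintro rfl
      simp only [zpow_zero] at hka
      exact hk1 hka
    -- push the relation to Isom 3
    have hrel : γ * g ^ a * γ⁻¹ = g ^ c := by
      have h1 : (MulAut.conj γh).toMonoidHom k = γh * k * γh⁻¹ := rfl
      rw [h1] at hkc
      have h3 := congrArg G.subtype hkc
      rw [map_mul, map_mul, map_inv, map_zpow] at h3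
      have h4 : G.subtype k = g ^ a := by rw [hka, map_zpow]; rfl
      rw [h4] at h3
      exact h3
    have hc0 : c ≠ 0 := by
      rintro rfl
      simp only [zpow_zero] at hrel
      have : g ^ a = 1 := by
        have := congrArg (fun x => γ⁻¹ * x * γ) hrel
        group at this
        simpa using this
      have hpa := axis a
      rw [this] at hpa
      simp only [IsometryEquiv.coe_one, id_eq] at hpa
      have h5 : ((a : ℝ)) • b₁ = 0 := (left_eq_add.mp hpa)
      rcases smul_eq_zero.mp h5 with h | h
      · exact ha0 (by exact_mod_cast h)
      · exact hb₁ne h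
    -- derive the direction invariance
    have zrel : ∀ n : ℤ, γ * g ^ (a * n) * γ⁻¹ = g ^ (c * n) := by
      intro n
      have := congrArg (fun x => x ^ n) hrel
      rw [conj_zpow, ← zpow_mul, ← zpow_mul] at this
      exact this
    set L : E 3 := lin γ b₁ with hL
    have bound : ∀ n : ℤ, ‖(n : ℝ) • ((a : ℝ) • L - (c : ℝ) • b₁)‖ ≤ 2 * ‖γ p - p‖ := by
      intro n
      have e1 : γ ((g ^ (a * n)) p) = (g ^ (c * n)) (γ p) := by
        rw [← zrel n]
        have : (γ * g ^ (a * n) * γ⁻¹) (γ p) = γ ((g ^ (a * n)) (γ⁻¹ (γ p))) := rfl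
        rw [this]
        exact congrArg (fun z => γ ((g ^ (a * n)) z)) (γ.symm_apply_apply p).symm
      rw [axis (a * n)] at e1
      rw [isom_add γ p _] at e1
      have e2 : ‖(g ^ (c * n)) (γ p) - (g ^ (c * n)) p‖ = ‖γ p - p‖ := by
        have := (g ^ (c * n)).isometry.dist_eq (γ p) p
        simpa [dist_eq_norm] using this
      rw [axis (c * n)] at e2
      have e3 : lin γ (((a * n : ℤ) : ℝ) • b₁) = ((a * n : ℤ) : ℝ) • L := by
        rw [map_smul, hL]
      rw [e3] at e1
      -- e1 : γ p + ((a*n) : ℝ) • L = (g ^ (c*n)) (γ p)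
      have e4 : (g ^ (c * n)) (γ p) - (p + ((c * n : ℤ) : ℝ) • b₁) = γ p - p + ((n : ℝ) • ((a:ℝ) • L - (c:ℝ) • b₁)) + ((c * n : ℤ) : ℝ) • b₁ - ((c * n : ℤ) : ℝ) • b₁ - (0 : E 3) := by
        rw [← e1]
        push_cast
        module
      have e5 : (g ^ (c * n)) (γ p) - (p + ((c * n : ℤ) : ℝ) • b₁) =
          γ p - p + (n : ℝ) • ((a:ℝ) • L - (c:ℝ) • b₁) := by
        rw [e4]; abel
      have e6 : ‖γ p - p + (n : ℝ) • ((a:ℝ) • L - (c:ℝ) • b₁)‖ = ‖γ p - p‖ := by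
        rw [← e5, e2]
      calc ‖(n : ℝ) • ((a:ℝ) • L - (c:ℝ) • b₁)‖
          = ‖(γ p - p + (n : ℝ) • ((a:ℝ) • L - (c:ℝ) • b₁)) - (γ p - p)‖ := by
            congr 1; abel
        _ ≤ ‖γ p - p + (n : ℝ) • ((a:ℝ) • L - (c:ℝ) • b₁)‖ + ‖γ p - p‖ := norm_sub_le _ _
        _ = 2 * ‖γ p - p‖ := by rw [e6]; ring
    have hv0 : (a : ℝ) • L - (c : ℝ) • b₁ = 0 := by
      by_contra hv
      have hvpos : 0 < ‖(a : ℝ) • L - (c : ℝ) • b₁‖ := norm_pos_iff.mpr hv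
      obtain ⟨n, hn⟩ := exists_nat_gt ((2 * ‖γ p - p‖) / ‖(a : ℝ) • L - (c : ℝ) • b₁‖)
      have h1 := bound (n : ℤ)
      rw [norm_smul] at h1
      have h2 : 2 * ‖γ p - p‖ < (n : ℝ) * ‖(a : ℝ) • L - (c : ℝ) • b₁‖ :=
        (div_lt_iff₀ hvpos).mp hn
      simp only [Int.cast_natCast, Real.norm_natCast] at h1
      linarith
    refine ⟨(c : ℝ) / (a : ℝ), div_ne_zero (by exact_mod_cast hc0) (by exact_mod_cast ha0), ?_⟩
    have haR : (a : ℝ) ≠ 0 := by exact_mod_cast ha0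
    have hLb : (a : ℝ) • L = (c : ℝ) • b₁ := by linear_combination (norm := module) hv0
    rw [div_eq_inv_mul, mul_smul, ← hLb, inv_smul_smul₀ haR]
  -- movement lemmas
  have hmove : ∀ (δh : ↥G) (x : E 3) (t : ℝ),
      ∃ t' : ℝ, (δh : Isom 3) (x + t • b₁) = (δh : Isom 3) x + t' • b₁ := by
    intro δh x t
    obtain ⟨s, hs0, hsb⟩ := hs δh
    refine ⟨t * s, ?_⟩
    rw [isom_add, map_smul, hsb, smul_smul]
  set π : E 3 →ₗ[ℝ] E 3 := perp b₁ with hπ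
  have hπmove : ∀ (δh : ↥G) (x : E 3) (t : ℝ),
      π ((δh : Isom 3) (x + t • b₁)) = π ((δh : Isom 3) x) := by
    intro δh x t
    obtain ⟨t', ht'⟩ := hmove δh x t
    rw [ht', hπ, perp_add_smul b₁ hb₁ne]
  -- the orbit map
  set cc : ↥G → E 3 := fun δh => π ((δh : Isom 3) p) with hcc
  have hccπ : ∀ δh, π (cc δh) = cc δh := by
    intro δh; rw [hcc, hπ]; exact perp_idem b₁ hb₁ne _
  have hcc_mul_g : ∀ (δh : ↥G) (n : ℤ), cc (δh * g₀ ^ n) = cc δh := by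
    intro δh n
    have h1 : ((δh * g₀ ^ n : ↥G) : Isom 3) = (δh : Isom 3) * g ^ n := by
      show G.subtype (δh * g₀ ^ n) = _
      rw [map_mul, hcoe_zpow]; rfl
    rw [hcc]
    simp only [h1]
    have h2 : ((δh : Isom 3) * g ^ n) p = (δh : Isom 3) ((g ^ n) p) := rfl
    rw [h2, axis n, hπmove]
  -- the composite projection identity
  have hπcomp : ∀ (γh δh : ↥G), π ((γh : Isom 3) (cc δh)) = cc (γh * δh) := by
    intro γh δh
    obtain ⟨t, ht⟩ := exists_perp_add b₁ ((δh : Isom 3) p)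
    have h1 : cc δh = (δh : Isom 3) p + (-t) • b₁ := by
      rw [hcc, hπ, neg_smul]
      rw [ht]  -- careful: rewrite RHS
      abel
    rw [h1, hπmove γh _ (-t)]
    have h2 : (γh : Isom 3) ((δh : Isom 3) p) = ((γh * δh : ↥G) : Isom 3) p := by
      rw [Subgroup.coe_mul]; rfl
    rw [hcc]
    rw [h2]
  -- finiteness of the orbit
  have hwd : ∀ x y : ↥G, (QuotientGroup.leftRel H) x y → cc x = cc y := by
    intro x y hxy
    have h1 : x⁻¹ * y ∈ H := QuotientGroup.leftRel_apply.mp hxy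
    obtain ⟨n, hn⟩ := hHzpow _ h1
    have : y = x * g₀ ^ n := by rw [← hn]; group
    rw [this, hcc_mul_g]
  set F : (↥G ⧸ H) → E 3 := fun q => Quotient.liftOn' q cc hwd with hF
  have hFmk : ∀ δh : ↥G, F (QuotientGroup.mk δh) = cc δh := by
    intro δh; rfl
  set O : Set (E 3) := Set.range F with hO
  have hOfin : O.Finite := Set.finite_range F
  have hccO : ∀ δh, cc δh ∈ O := fun δh => ⟨QuotientGroup.mk δh, hFmk δh⟩
  have hOcc : ∀ o ∈ O, ∃ δh : ↥G, o = cc δh := by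
    rintro o ⟨q, rfl⟩
    obtain ⟨δh, rfl⟩ := QuotientGroup.mk_surjective q
    exact ⟨δh, (hFmk δh).symm⟩
  -- the barycenter
  set T : Finset (E 3) := hOfin.toFinset with hTd
  have hmemT : ∀ x, x ∈ T ↔ x ∈ O := by
    intro x; rw [hTd]; exact Set.Finite.mem_toFinset hOfin
  set S : E 3 := ∑ x ∈ T, x with hS
  set N : ℕ := T.card with hN
  have hpO' : p ∈ O := by
    have : cc 1 = p := by
      show π (((1 : ↥G) : Isom 3) p) = p
      have h1 : ((1 : ↥G) : Isom 3) p = p := rfl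
      rw [h1, hπ, perp_orthogonal b₁ p hpb₁]
    rw [← this]; exact hccO 1
  have hNne : (N : ℝ) ≠ 0 := by
    have : p ∈ T := (hmemT p).mpr hpO'
    have : 0 < N := Finset.card_pos.mpr ⟨p, this⟩
    exact_mod_cast this.ne'
  set cstar : E 3 := (N : ℝ)⁻¹ • S with hcstar
  -- equivariance of the barycenter
  have hfix : ∀ γh : ↥G, π ((γh : Isom 3) cstar) = cstar := by
    intro γh
    set γ : Isom 3 := (γh : Isom 3) with hγ
    have hmapsTo : ∀ x ∈ T, π (γ x) ∈ T := by
      intro x hx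
      obtain ⟨δh, rfl⟩ := hOcc x ((hmemT x).mp hx)
      rw [hγ, hπcomp γh δh]
      exact (hmemT _).mpr (hccO _)
    have hmapsTo' : ∀ x ∈ T, π ((γ⁻¹ : Isom 3) x) ∈ T := by
      intro x hx
      obtain ⟨δh, rfl⟩ := hOcc x ((hmemT x).mp hx)
      have : (γ⁻¹ : Isom 3) = ((γh⁻¹ : ↥G) : Isom 3) := by rw [hγ]; rfl
      rw [this, hπcomp γh⁻¹ δh]
      exact (hmemT _).mpr (hccO _)
    have hli : ∀ x ∈ T, π ((γ⁻¹ : Isom 3) (π (γ x))) = x := by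
      intro x hx
      obtain ⟨δh, rfl⟩ := hOcc x ((hmemT x).mp hx)
      rw [hγ, hπcomp γh δh]
      have h2 : (γ⁻¹ : Isom 3) = ((γh⁻¹ : ↥G) : Isom 3) := by rw [hγ]; rfl
      rw [h2, hπcomp γh⁻¹ (γh * δh)]
      rw [inv_mul_cancel_left]
    have hri : ∀ x ∈ T, π (γ (π ((γ⁻¹ : Isom 3) x))) = x := by
      intro x hx
      obtain ⟨δh, rfl⟩ := hOcc x ((hmemT x).mp hx)
      have h2 : (γ⁻¹ : Isom 3) = ((γh⁻¹ : ↥G) : Isom 3) := by rw [hγ]; rfl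
      rw [h2, hπcomp γh⁻¹ δh, hγ, hπcomp γh (γh⁻¹ * δh)]
      rw [mul_inv_cancel_left]
    have hsum : ∑ x ∈ T, π (γ x) = S := by
      rw [hS]
      exact Finset.sum_nbij' (fun x => π (γ x)) (fun x => π ((γ⁻¹ : Isom 3) x))
        hmapsTo hmapsTo' hli hri (fun a _ => rfl)
    -- now compute π (γ cstar)
    have hsum2 : ∑ x ∈ T, π (lin γ x) = S - (N : ℝ) • π (γ 0) := by
      have h1 : ∀ x, π (lin γ x) = π (γ x) - π (γ 0) := by
        intro x
        rw [lin_apply, map_sub]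
      calc ∑ x ∈ T, π (lin γ x) = ∑ x ∈ T, (π (γ x) - π (γ 0)) := by
            apply Finset.sum_congr rfl; intro x _; exact h1 x
        _ = (∑ x ∈ T, π (γ x)) - (N : ℝ) • π (γ 0) := by
            rw [Finset.sum_sub_distrib, Finset.sum_const, hN, ← Nat.cast_smul_eq_nsmul ℝ]
        _ = S - (N : ℝ) • π (γ 0) := by rw [hsum]
    have hlinsum : π (lin γ S) = S - (N : ℝ) • π (γ 0) := by
      rw [← hsum2, hS]
      have : lin γ (∑ x ∈ T, x) = ∑ x ∈ T, lin γ x := map_sum (lin γ).toLinearEquiv.toLinearMap _ T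
      rw [this, map_sum]
    calc π (γ cstar) = π (lin γ cstar + γ 0) := by rw [← isom_affine]
      _ = π (lin γ cstar) + π (γ 0) := map_add π _ _
      _ = (N : ℝ)⁻¹ • π (lin γ S) + π (γ 0) := by
          rw [hcstar, map_smul, map_smul]
      _ = (N : ℝ)⁻¹ • (S - (N : ℝ) • π (γ 0)) + π (γ 0) := by rw [hlinsum]
      _ = cstar := by
          rw [hcstar, smul_sub, smul_smul, inv_mul_cancel₀ hNne, one_smul]
          abel
  -- the invariant line
  set Lset : Set (E 3) := {x | ∃ t : ℝ, x = cstar + t • b₁} with hLset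
  have hLline : IsLine Lset := ⟨cstar, b₁, hb₁ne, rfl⟩
  have hLinv : ∀ γh : ↥G, (γh : Isom 3) '' Lset = Lset := by
    intro γh
    set γ : Isom 3 := (γh : Isom 3) with hγ
    obtain ⟨s, hs0, hsb⟩ := hs γh
    rw [← hγ] at hsb
    obtain ⟨t₀, ht₀⟩ := exists_perp_add b₁ (γ cstar)
    rw [hfix γh] at ht₀
    -- ht₀ : γ cstar = cstar + t₀ • b₁
    have him : ∀ t : ℝ, γ (cstar + t • b₁) = cstar + (t₀ + t * s) • b₁ := by
      intro t
      have h2 : lin γ (t • b₁) = (t * s) • b₁ := by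
        rw [map_smul, hsb, smul_smul]
      rw [isom_add, h2, ht₀]
      module
    ext x
    constructor
    · rintro ⟨y, ⟨t, rfl⟩, rfl⟩
      exact ⟨t₀ + t * s, (him t)⟩
    · rintro ⟨u, rfl⟩
      refine ⟨cstar + ((u - t₀) / s) • b₁, ⟨(u - t₀) / s, rfl⟩, ?_⟩
      rw [him]
      congr 1
      field_simp
      congr 1; ring
  -- uniqueness gives Lset = l
  have hLl : Lset = l := by
    apply huniq Lset hLline
    intro γ hγ
    exact hLinv ⟨γ, hΓlG hγ⟩
  -- conclude
  apply le_antisymm _ hΓlG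
  intro γ hγ
  have : γ ∈ (Γl : Set (Isom 3)) := by
    rw [hΓl]
    refine ⟨hGΓ hγ, ?_⟩
    rw [← hLl]
    exact hLinv ⟨γ, hγ⟩
  exact this
end
end

section
/- Let Γ be an n-crystallographic group and let G be a maximal virtually infinite cyclic subgroup of Γ × ℤ. Let π : Γ × ℤ → Γ be the projection. Then at least one of the following holds: (1) π restricted to G is injective, so G is isomorphic to the virtually infinite cyclic subgroup π(G) of Γ; or (2) G = F × ℤ (the subgroup π(G) × ℤ of Γ × ℤ), where F = π(G) is a maximal finite subgroup of Γ. -/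
noncomputable section

/-! If `π = fst` is not injective on `G`, then `G` contains some `(1, z)` with `z ≠ 1`, an
element of infinite order; in a virtually infinite cyclic group every subgroup containing such
an element has finite index, so `ker (π|G)` has finite index and `π(G)` is finite. Then
`G ≤ π(G) × ℤ`, which is virtually infinite cyclic, so maximality forces equality, and the
same argument applied to any finite `F' ≥ π(G)` gives `G = F' × ℤ`, whence `F' = π(G)`. -/

namespace Subgroup

variable {G N : Type*} [Group G] [Group N]

theorem finiteIndex_zpowers_of_mulEquiv_int (e : G ≃* Multiplicative ℤ) {g : G} (hg : g ≠ 1) :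
    (zpowers g).FiniteIndex := by
  constructor
  rw [← index_map_equiv _ e, MonoidHom.map_zpowers]
  change (AddSubgroup.zmultiples (e g).toAdd).toSubgroup.index ≠ 0
  rw [AddSubgroup.index_toSubgroup, Int.index_zmultiples]
  simpa using hg

def equivMapOfInjOn (H : Subgroup G) (f : G →* N) (hf : Set.InjOn f H) : H ≃* H.map f :=
  (MonoidHom.ofInjective (f := f.domRestrict H) fun x y h => Subtype.ext (hf x.2 y.2 h)).trans
    (MulEquiv.subgroupCongr (MonoidHom.domRestrict_range H f))

theorem map_fst_prod_top (F : Subgroup G) :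
    (F.prod (⊤ : Subgroup N)).map (MonoidHom.fst G N) = F := by
  rw [prod_top, map_comap_eq_self_of_surjective Prod.fst_surjective]

end Subgroup

namespace IsVirtuallyInfiniteCyclic

variable {G : Type*} [Group G]

theorem of_mulEquiv {H : Type*} [Group H] (e : G ≃* H) (hG : IsVirtuallyInfiniteCyclic G) :
    IsVirtuallyInfiniteCyclic H := by
  obtain ⟨K, hK, ⟨f⟩⟩ := hG
  exact ⟨K.map (e : G →* H), ⟨by rw [Subgroup.index_map_equiv]; exact hK.index_ne_zero⟩,
    ⟨(e.subgroupMap K).symm.trans f⟩⟩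

theorem finiteIndex_of_not_isOfFinOrder (hG : IsVirtuallyInfiniteCyclic G) {K : Subgroup G}
    {g : G} (hgK : g ∈ K) (hg : ¬IsOfFinOrder g) : K.FiniteIndex := by
  obtain ⟨H, hH, ⟨e⟩⟩ := hG
  -- `H` need not be normal, but its normal core has finite index and absorbs `k`-th powers.
  set k := H.normalCore.index
  have hk : k ≠ 0 := Subgroup.FiniteIndex.index_ne_zero
  have hgkH : g ^ k ∈ H := H.normalCore_le (H.normalCore.pow_index_mem g)
  have hgk : g ^ k ≠ 1 := fun h =>
    hg (isOfFinOrder_iff_pow_eq_one.2 ⟨k, Nat.pos_of_ne_zero hk, h⟩)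
  have hfiH : (Subgroup.zpowers (⟨g ^ k, hgkH⟩ : H)).FiniteIndex :=
    Subgroup.finiteIndex_zpowers_of_mulEquiv_int e (Subtype.coe_ne_coe.1 hgk)
  have hfiG : (Subgroup.zpowers (g ^ k)).FiniteIndex := by
    have h := Subgroup.index_map_subtype (Subgroup.zpowers (⟨g ^ k, hgkH⟩ : H))
    rw [MonoidHom.map_zpowers] at h
    exact ⟨h ▸ mul_ne_zero hfiH.index_ne_zero hH.index_ne_zero⟩
  exact Subgroup.finiteIndex_of_le (Subgroup.zpowers_le.2 (K.pow_mem hgK k))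

theorem prod_int (F : Type*) [Group F] [Finite F] :
    IsVirtuallyInfiniteCyclic (F × Multiplicative ℤ) := by
  set inr := MonoidHom.inr F (Multiplicative ℤ)
  have hker : (MonoidHom.fst F (Multiplicative ℤ)).ker = inr.range := by
    ext ⟨a, b⟩
    simp [inr, Subgroup.mem_prod, eq_comm]
  have hinr : Function.Injective inr := fun _ _ h => congrArg Prod.snd h
  exact ⟨_, Subgroup.finiteIndex_ker _,
    ⟨(MulEquiv.subgroupCongr hker).trans (MonoidHom.ofInjective hinr).symm⟩⟩

end IsVirtuallyInfiniteCyclic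

namespace Subgroup

variable {G N : Type*} [Group G] [Group N]

theorem isVirtuallyInfiniteCyclic_prod_top (F : Subgroup G) [Finite F] :
    IsVirtuallyInfiniteCyclic (F.prod (⊤ : Subgroup (Multiplicative ℤ))) :=
  (IsVirtuallyInfiniteCyclic.prod_int F).of_mulEquiv
    ((F.prodEquiv ⊤).trans (MulEquiv.prodCongr (MulEquiv.refl F) topEquiv)).symm

theorem finite_map_fst_of_not_injOn [IsMulTorsionFree N] {K : Subgroup (G × N)}
    (hK : IsVirtuallyInfiniteCyclic K) (hinj : ¬Set.InjOn (MonoidHom.fst G N) K) :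
    Finite (K.map (MonoidHom.fst G N)) := by
  rw [Set.injOn_iff_map_eq_one] at hinj
  push Not at hinj
  obtain ⟨a, haK, ha1, hne⟩ := hinj
  have ha2 : a.2 ≠ 1 := fun h => hne (Prod.ext ha1 h)
  have ha : ¬IsOfFinOrder (⟨a, haK⟩ : K) := fun h =>
    not_isOfFinOrder_of_isMulTorsionFree ha2 (((MonoidHom.snd G N).domRestrict K).isOfFinOrder h)
  set π := (MonoidHom.fst G N).domRestrict K
  have hfi : π.ker.FiniteIndex := hK.finiteIndex_of_not_isOfFinOrder (g := ⟨a, haK⟩) ha1 ha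
  rw [← MonoidHom.domRestrict_range]
  exact Nat.finite_of_card_ne_zero (index_ker π ▸ hfi.index_ne_zero)

end Subgroup

theorem maximal_vic_of_product_general {n : ℕ}
    (Γ : Subgroup (Isom n))
    (G : Subgroup (Γ × Multiplicative ℤ))
    (hvc : IsVirtuallyInfiniteCyclic G)
    (hmax : ∀ G' : Subgroup (Γ × Multiplicative ℤ), G ≤ G' →
      IsVirtuallyInfiniteCyclic G' → G = G') :
    (Set.InjOn (MonoidHom.fst Γ (Multiplicative ℤ)) (G : Set (Γ × Multiplicative ℤ)) ∧
      Nonempty (G ≃* Subgroup.map (MonoidHom.fst Γ (Multiplicative ℤ)) G) ∧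
      IsVirtuallyInfiniteCyclic (Subgroup.map (MonoidHom.fst Γ (Multiplicative ℤ)) G)) ∨
    (G = (Subgroup.map (MonoidHom.fst Γ (Multiplicative ℤ)) G).prod
        (⊤ : Subgroup (Multiplicative ℤ)) ∧
      Finite (Subgroup.map (MonoidHom.fst Γ (Multiplicative ℤ)) G) ∧
      ∀ F' : Subgroup Γ, Subgroup.map (MonoidHom.fst Γ (Multiplicative ℤ)) G ≤ F' →
        Finite F' → Subgroup.map (MonoidHom.fst Γ (Multiplicative ℤ)) G = F') := by
  set π := MonoidHom.fst Γ (Multiplicative ℤ)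
  by_cases hinj : Set.InjOn π G
  · exact Or.inl ⟨hinj, ⟨G.equivMapOfInjOn π hinj⟩,
      hvc.of_mulEquiv (G.equivMapOfInjOn π hinj)⟩
  have hfin : Finite (G.map π) := Subgroup.finite_map_fst_of_not_injOn hvc hinj
  have le_prod_top (F : Subgroup Γ) (hF : G.map π ≤ F) : G ≤ F.prod ⊤ := by
    rw [Subgroup.prod_top]
    exact Subgroup.map_le_iff_le_comap.1 hF
  refine Or.inr ⟨hmax _ (le_prod_top _ le_rfl) (Subgroup.isVirtuallyInfiniteCyclic_prod_top _),
    hfin, fun F' hF' _ => ?_⟩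
  rw [hmax _ (le_prod_top F' hF') (Subgroup.isVirtuallyInfiniteCyclic_prod_top F'),
    Subgroup.map_fst_prod_top]

/-- Lemma 6.3. Let `Γ` be an `n`-crystallographic group and `G` a maximal
virtually infinite cyclic subgroup of `Γ × ℤ`, with `π : Γ × ℤ → Γ` the projection.  Then
either `π` is injective on `G` (so `G` is isomorphic to the virtually infinite cyclic subgroup
`π(G)` of `Γ`), or `G = π(G) × ℤ` with `π(G)` a maximal finite subgroup of `Γ`. -/
theorem maximal_vic_of_product {n : ℕ}
    (Γ : Subgroup (Isom n)) (hΓ : IsCrystallographic Γ)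
    (G : Subgroup (Γ × Multiplicative ℤ))
    (hvc : IsVirtuallyInfiniteCyclic G)
    (hmax : ∀ G' : Subgroup (Γ × Multiplicative ℤ), G ≤ G' →
      IsVirtuallyInfiniteCyclic G' → G = G') :
    (Set.InjOn (MonoidHom.fst Γ (Multiplicative ℤ)) (G : Set (Γ × Multiplicative ℤ)) ∧
      Nonempty (G ≃* Subgroup.map (MonoidHom.fst Γ (Multiplicative ℤ)) G) ∧
      IsVirtuallyInfiniteCyclic (Subgroup.map (MonoidHom.fst Γ (Multiplicative ℤ)) G)) ∨
    (G = (Subgroup.map (MonoidHom.fst Γ (Multiplicative ℤ)) G).prod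
        (⊤ : Subgroup (Multiplicative ℤ)) ∧
      Finite (Subgroup.map (MonoidHom.fst Γ (Multiplicative ℤ)) G) ∧
      ∀ F' : Subgroup Γ, Subgroup.map (MonoidHom.fst Γ (Multiplicative ℤ)) G ≤ F' →
        Finite F' → Subgroup.map (MonoidHom.fst Γ (Multiplicative ℤ)) G = F') :=
  maximal_vic_of_product_general Γ G hvc hmax
end
end

section
/- Let Γ be an n-crystallographic group and F a finite subgroup of Γ. Then F is a maximal finite subgroup of Γ if and only if F × ℤ is a maximal virtually infinite cyclic subgroup of Γ × ℤ. -/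
noncomputable section

lemma aux_zpowers_eq (m : Multiplicative ℤ) :
    Subgroup.zpowers m = AddSubgroup.toSubgroup (AddSubgroup.zmultiples m.toAdd) := by
  ext y
  show (∃ k : ℤ, m ^ k = y) ↔ y.toAdd ∈ AddSubgroup.zmultiples m.toAdd
  simp only [AddSubgroup.mem_zmultiples_iff]
  constructor
  · rintro ⟨k, rfl⟩; exact ⟨k, by simp [toAdd_zpow, zsmul_eq_mul]⟩
  · rintro ⟨k, hk⟩
    exact ⟨k, by apply Multiplicative.toAdd.injective; simpa [toAdd_zpow, zsmul_eq_mul] using hk⟩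

lemma aux_zpowers_fi (m : Multiplicative ℤ) (h : m ≠ 1) : (Subgroup.zpowers m).FiniteIndex := by
  constructor
  rw [aux_zpowers_eq, AddSubgroup.index_toSubgroup, Int.index_zmultiples]
  simpa using fun hh => h (by simpa using congrArg Multiplicative.ofAdd hh)

/-- A subgroup of `Multiplicative ℤ` containing a nontrivial element has finite index. -/
lemma aux_mzint_fi (S : Subgroup (Multiplicative ℤ)) {m : Multiplicative ℤ}
    (hm : m ∈ S) (h1 : m ≠ 1) : S.FiniteIndex := by
  have := aux_zpowers_fi m h1
  exact Subgroup.finiteIndex_of_le ((Subgroup.zpowers_le).mpr hm)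

/-- The canonical embedding of `ℤ` into `F × ℤ` inside `Γ' × ℤ`, for `F'` any subgroup
containing `F.prod ⊤`. -/
def auxIota {Γ' : Type*} [Group Γ'] (G' : Subgroup (Γ' × Multiplicative ℤ))
    (h : ∀ z : Multiplicative ℤ, ((1 : Γ'), z) ∈ G') : Multiplicative ℤ →* G' where
  toFun z := ⟨(1, z), h z⟩
  map_one' := rfl
  map_mul' z w := by
    apply Subtype.ext
    simp [Prod.ext_iff]

lemma auxIota_injective {Γ' : Type*} [Group Γ'] (G' : Subgroup (Γ' × Multiplicative ℤ))
    (h : ∀ z : Multiplicative ℤ, ((1 : Γ'), z) ∈ G') :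
    Function.Injective (auxIota G' h) := by
  intro z w hzw
  have h2 : ((auxIota G' h z : G') : Γ' × Multiplicative ℤ) =
      ((auxIota G' h w : G') : Γ' × Multiplicative ℤ) := congrArg Subtype.val hzw
  simpa [auxIota, Prod.ext_iff] using h2

lemma aux_vic_prod {Γ' : Type*} [Group Γ'] (F : Subgroup Γ') (hF : Finite F) :
    IsVirtuallyInfiniteCyclic (F.prod (⊤ : Subgroup (Multiplicative ℤ))) := by
  have hmem : ∀ z : Multiplicative ℤ, ((1 : Γ'), z) ∈ F.prod ⊤ :=
    fun z => ⟨F.one_mem, trivial⟩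
  set ι := auxIota (F.prod ⊤) hmem
  refine ⟨ι.range, ?_, ⟨(MonoidHom.ofInjective (auxIota_injective _ hmem)).symm⟩⟩
  -- the range of ι is the kernel of the projection to Γ'
  set ψ : ↥(F.prod (⊤ : Subgroup (Multiplicative ℤ))) →* Γ' :=
    (MonoidHom.fst Γ' (Multiplicative ℤ)).comp (F.prod ⊤).subtype with hψ
  have hker : ι.range = ψ.ker := by
    ext ⟨⟨g, z⟩, hgz⟩
    constructor
    · rintro ⟨w, hw⟩
      have h0 : ((ι w : ↥(F.prod (⊤ : Subgroup (Multiplicative ℤ)))) :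
          Γ' × Multiplicative ℤ) = (g, z) := congrArg Subtype.val hw
      have h1 : (1 : Γ') = g := congrArg Prod.fst h0
      show ψ ⟨(g, z), hgz⟩ = 1
      exact h1.symm
    · intro hk
      have hg : g = 1 := hk
      exact ⟨z, by apply Subtype.ext; simp [ι, auxIota, hg]⟩
  have hrange : ψ.range ≤ F := by
    rintro g ⟨⟨⟨g', z⟩, hgz⟩, rfl⟩
    exact hgz.1
  have hFset : (F : Set Γ').Finite := Set.toFinite _
  have : ((ψ.range : Subgroup Γ') : Set Γ').Finite := hFset.subset hrange
  haveI : Finite ψ.range := this.to_subtype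
  rw [hker]
  infer_instance

/-- Lemma 6.4. Let `Γ` be an `n`-crystallographic group and `F` a finite
subgroup of `Γ`.  Then `F` is a maximal finite subgroup of `Γ` iff `F × ℤ` is a maximal
virtually infinite cyclic subgroup of `Γ × ℤ`. -/
theorem maximal_finite_iff_maximal_vic {n : ℕ}
    (Γ : Subgroup (Isom n)) (hΓ : IsCrystallographic Γ)
    (F : Subgroup Γ) (hF : Finite F) :
    (∀ F' : Subgroup Γ, F ≤ F' → Finite F' → F = F') ↔
    (IsVirtuallyInfiniteCyclic (F.prod (⊤ : Subgroup (Multiplicative ℤ))) ∧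
      ∀ G' : Subgroup (Γ × Multiplicative ℤ),
        F.prod (⊤ : Subgroup (Multiplicative ℤ)) ≤ G' → IsVirtuallyInfiniteCyclic G' →
          F.prod (⊤ : Subgroup (Multiplicative ℤ)) = G') := by
  constructor
  · intro hmax
    refine ⟨aux_vic_prod F hF, ?_⟩
    intro G' hle hvic
    obtain ⟨H, hHfi, ⟨e⟩⟩ := hvic
    haveI := hHfi
    have hmem : ∀ z : Multiplicative ℤ, ((1 : ↥Γ), z) ∈ G' :=
      fun z => hle ⟨F.one_mem, trivial⟩
    set ζ := auxIota G' hmem with hζ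
    -- find a nontrivial element of H in the kernel of the projection to Γ
    haveI : Finite (↥G' ⧸ H) := Subgroup.finite_quotient_of_finiteIndex
    have hninj : ¬ Function.Injective
        (fun z : Multiplicative ℤ => ((ζ z : ↥G') : ↥G' ⧸ H)) := by
      intro hinj
      haveI := Finite.of_injective _ hinj
      exact not_finite (Multiplicative ℤ)
    rw [Function.not_injective_iff] at hninj
    obtain ⟨z, w, hq, hzw⟩ := hninj
    set x : ↥G' := (ζ w)⁻¹ * ζ z with hx
    have hxH : x ∈ H := by
      rw [hx]
      exact (QuotientGroup.leftRel_apply).mp (Quotient.exact hq.symm)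
    have hx1 : x ≠ 1 := by
      intro h1
      refine hzw (auxIota_injective G' hmem ?_)
      have h2 := congrArg (fun y => (ζ w) * y) h1
      simpa [hx, mul_inv_cancel_left] using h2
    -- the projection
    set ψ : ↥G' →* ↥Γ :=
      (MonoidHom.fst (↥Γ) (Multiplicative ℤ)).comp G'.subtype with hψ
    have hxker : x ∈ ψ.ker := by
      have : ∀ u, ψ (ζ u) = 1 := fun u => rfl
      simp [hx, MonoidHom.mem_ker, map_mul, map_inv, this]
    -- finite index of ψ.ker
    have hm1 : e ⟨x, hxH⟩ ≠ 1 := by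
      intro h
      apply hx1
      have := e.injective (h.trans (map_one e).symm)
      exact congrArg Subtype.val this
    have hSfi : ((ψ.ker ⊓ H).subgroupOf H).FiniteIndex := by
      set S := (ψ.ker ⊓ H).subgroupOf H with hS
      have hmmem : e ⟨x, hxH⟩ ∈ S.map e.toMonoidHom :=
        ⟨⟨x, hxH⟩, by simp [hS, Subgroup.mem_subgroupOf, Subgroup.mem_inf, hxker, hxH], rfl⟩
      have hfi := aux_mzint_fi _ hmmem hm1
      constructor
      have := Subgroup.index_map_eq S (f := e.toMonoidHom) e.surjective
        (by rw [(MonoidHom.ker_eq_bot_iff _).mpr e.injective]; exact bot_le)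
      rw [← this]
      exact hfi.index_ne_zero
    have hTfi : (ψ.ker ⊓ H).FiniteIndex := by
      constructor
      rw [← Subgroup.relIndex_mul_index (inf_le_right : ψ.ker ⊓ H ≤ H)]
      exact mul_ne_zero hSfi.index_ne_zero hHfi.index_ne_zero
    haveI := hTfi
    haveI : ψ.ker.FiniteIndex := Subgroup.finiteIndex_of_le (H := ψ.ker ⊓ H) inf_le_left
    haveI : Finite (↥G' ⧸ ψ.ker) := Subgroup.finite_quotient_of_finiteIndex
    haveI : Finite ψ.range :=
      Finite.of_equiv _ (QuotientGroup.quotientKerEquivRange ψ).toEquiv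
    -- the image of G' in Γ is a finite subgroup containing F
    have hrange_eq : ψ.range = G'.map (MonoidHom.fst (↥Γ) (Multiplicative ℤ)) := by
      rw [hψ, MonoidHom.range_comp, Subgroup.range_subtype]
    have hFle : F ≤ G'.map (MonoidHom.fst (↥Γ) (Multiplicative ℤ)) := by
      intro g hg
      exact ⟨(g, 1), hle ⟨hg, trivial⟩, rfl⟩
    haveI : Finite (G'.map (MonoidHom.fst (↥Γ) (Multiplicative ℤ))) := by
      rw [← hrange_eq]; infer_instance
    have hFeq := hmax _ hFle this
    refine le_antisymm hle ?_
    rintro ⟨g, z⟩ hgz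
    exact ⟨by rw [hFeq]; exact ⟨(g, z), hgz, rfl⟩, trivial⟩
  · rintro ⟨-, hmax⟩ F' hFF' hF'fin
    have hle : F.prod (⊤ : Subgroup (Multiplicative ℤ)) ≤ F'.prod ⊤ :=
      fun p hp => ⟨hFF' hp.1, hp.2⟩
    have h := hmax (F'.prod ⊤) hle (aux_vic_prod F' hF'fin)
    ext g
    constructor
    · exact fun hg => hFF' hg
    · intro hg
      have : (g, (1 : Multiplicative ℤ)) ∈ F'.prod ⊤ := ⟨hg, trivial⟩
      rw [← h] at this
      exact this.1
end
end
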